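/- arXiv:1404.1724 — 4 statements merged into one kernel-verified Lean document; each statement's English description precedes it below -/
import Mathlib

section
/- Let 0 < R ≤ ∞ and let u be a solution of the boundary-value problem (⋆)&(BC) on (0,R). If u(r) ≥ 0 for all r ∈ (0,R), then 0 < u(r) < s_+ for all r ∈ (0,R). -/
open Set Filter Topology MeasureTheory
open scoped ENNReal NNReal

/-- `γ₊ = ((1-p) + √((p-1)² + 4q))/2`, the positive root of `γ² + (p-1)γ - q = 0`. -/
noncomputable def gammaPlus (p q : ℝ) : ℝ :=
  ((1 - p) + Real.sqrt ((p - 1) ^ 2 + 4 * q)) / 2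

/-- Condition (condF) on the nonlinearity `F` (with `0 < sp` recorded separately). -/
def CondF (F : ℝ → ℝ) (sp : ℝ) : Prop :=
  ContDiff ℝ 1 F ∧ F 0 = 0 ∧ F sp = 0 ∧
    (∀ t ∈ Set.Ioo 0 sp, F t < 0) ∧ (∀ t, sp < t → 0 < F t) ∧ 0 < deriv F sp

/-- The ODE (⋆) `u'' + (p/r) u' - (q/r²) u = F(u)` holds at the point `r`. -/
def ODEAt (p q : ℝ) (F : ℝ → ℝ) (u : ℝ → ℝ) (r : ℝ) : Prop :=
  deriv (deriv u) r + (p / r) * deriv u r - (q / r ^ 2) * u r = F (u r)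

/-- `u` is a solution of the boundary-value problem (⋆)&(BC) on `(0,R)` with `R ∈ (0,∞]`:
`u` is continuous on `[0,R)`, `C²` on `(0,R)`, satisfies (⋆) pointwise on `(0,R)`,
`u(0) = 0`, and `u(r) → s₊` as `r → R⁻` (for `R < ∞`) resp. `r → ∞` (for `R = ∞`). -/
def IsBVPSolution (p q : ℝ) (F : ℝ → ℝ) (sp : ℝ) (R : ℝ≥0∞) (u : ℝ → ℝ) : Prop :=
  ContinuousOn u {r : ℝ | 0 ≤ r ∧ ENNReal.ofReal r < R} ∧
    (∀ r : ℝ, 0 < r → ENNReal.ofReal r < R → ContDiffAt ℝ 2 u r) ∧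
    (∀ r : ℝ, 0 < r → ENNReal.ofReal r < R → ODEAt p q F u r) ∧
    u 0 = 0 ∧
    (∀ R' : ℝ, 0 < R' → R = ENNReal.ofReal R' →
      Filter.Tendsto u (nhdsWithin R' (Set.Iio R')) (nhds sp)) ∧
    (R = ⊤ → Filter.Tendsto u Filter.atTop (nhds sp))

/-
If `u ≥ s₊` somewhere then, since `u 0 = 0` and `u → s₊` at the end of `(0,R)`, `u` has an
interior local maximum `r` with `u r ≥ s₊`. There `u' r = 0` and the equation gives
`u'' r = F (u r) + q u r / r² > 0`, contradicting the second-derivative test.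

If `u r = 0`, then `r` is a local minimum of `u ≥ 0`, so `u r = u' r = 0`. Away from `r = 0` the
equation is a regular second-order ODE with locally Lipschitz right-hand side, so by uniqueness
`u` vanishes near every point where `u = u' = 0`. The set where `u` vanishes locally is therefore
open and closed in `(0,R)`, hence all of it, contradicting `u → s₊ > 0`.
-/

lemma IsLocalMax.deriv_deriv_nonpos {f : ℝ → ℝ} {x : ℝ} (h : IsLocalMax f x)
    (hc : ContinuousAt f x) : deriv (deriv f) x ≤ 0 := by
  by_contra! hpos
  have hconst : f =ᶠ[𝓝 x] fun _ => f x :=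
    ((isLocalMin_of_deriv_deriv_pos hpos h.deriv_eq_zero hc).and h).mono
      fun y hy => le_antisymm hy.2 hy.1
  exact hpos.ne' (by rw [hconst.deriv.deriv_eq]; simp)

lemma IsPreconnected.eqOn_zero_of_eventuallyEq_zero {u : ℝ → ℝ} {I : Set ℝ}
    (hI : IsPreconnected I) (hc : ∀ x ∈ I, ContinuousAt u x ∧ ContinuousAt (deriv u) x)
    (hloc : ∀ x ∈ I, u x = 0 → deriv u x = 0 → u =ᶠ[𝓝 x] 0)
    {x₀ : ℝ} (hx₀ : x₀ ∈ I) (h0 : u =ᶠ[𝓝 x₀] 0) : EqOn u 0 I := by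
  set S := {x | u =ᶠ[𝓝 x] 0}
  have hS : IsOpen S := isOpen_setOfPred_eventually_nhds
  have hclosed : closure S ∩ I ⊆ S := by
    rintro x ⟨hxS, hxI⟩
    refine hloc x hxI ?_ ?_
    · exact (hc x hxI).1.continuousWithinAt.eq_const_of_mem_closure hxS
        fun y hy => hy.eq_of_nhds
    · exact (hc x hxI).2.continuousWithinAt.eq_const_of_mem_closure hxS
        fun y hy => by simpa using hy.deriv.eq_of_nhds
  have := hI.subset_of_closure_inter_subset hS ⟨x₀, hx₀, h0⟩ hclosed
  exact fun x hx => (this hx).eq_of_nhds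

def realIoo (R : ℝ≥0∞) : Set ℝ := {r | 0 < r ∧ ENNReal.ofReal r < R}

lemma isOpen_realIoo (R : ℝ≥0∞) : IsOpen (realIoo R) :=
  isOpen_Ioi.inter (isOpen_Iio.preimage ENNReal.continuous_ofReal)

lemma isPreconnected_realIoo (R : ℝ≥0∞) : IsPreconnected (realIoo R) :=
  OrdConnected.isPreconnected ⟨fun _ hx _ hy _ hz =>
    ⟨hx.1.trans_le hz.1, (ENNReal.ofReal_le_ofReal hz.2).trans_lt hy.2⟩⟩

lemma odeAt_iff {p q : ℝ} {F u : ℝ → ℝ} {r : ℝ} :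
    ODEAt p q F u r ↔ deriv (deriv u) r = F (u r) + q / r ^ 2 * u r - p / r * deriv u r := by
  unfold ODEAt
  constructor <;> intro h <;> linarith

lemma ODEAt.not_isLocalMax {p q : ℝ} {F u : ℝ → ℝ} {r : ℝ} (h : ODEAt p q F u r)
    (hq : 0 < q) (hr : 0 < r) (hu : 0 < u r) (hF : 0 ≤ F (u r)) (hc : ContinuousAt u r) :
    ¬IsLocalMax u r := fun hmax => by
  have h2 := hmax.deriv_deriv_nonpos hc
  rw [odeAt_iff.mp h, hmax.deriv_eq_zero] at h2
  have : 0 < q / r ^ 2 * u r := by positivity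
  linarith

lemma lipschitzOnWith_odeField {F : ℝ → ℝ} {L : ℝ≥0} {t : Set ℝ} (hF : LipschitzOnWith L F t)
    (a b : ℝ) :
    LipschitzOnWith (max 1 (L + ‖a‖₊ + ‖b‖₊))
      (fun z : ℝ × ℝ => (z.2, F z.1 + a * z.1 - b * z.2)) (t ×ˢ univ) := by
  have hfst : LipschitzOnWith 1 (Prod.fst : ℝ × ℝ → ℝ) (t ×ˢ univ) :=
    LipschitzWith.prod_fst.lipschitzOnWith
  have hsnd : LipschitzOnWith 1 (Prod.snd : ℝ × ℝ → ℝ) (t ×ˢ univ) :=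
    LipschitzWith.prod_snd.lipschitzOnWith
  have h := hsnd.prodMk (((hF.comp hfst fun z hz => hz.1).add
    ((lipschitzWith_smul a).comp_lipschitzOnWith hfst)).sub
    ((lipschitzWith_smul b).comp_lipschitzOnWith hsnd))
  simpa using h

lemma eventuallyEq_zero_of_odeAt {p q : ℝ} {F u : ℝ → ℝ} {r : ℝ} (hF : ContDiffAt ℝ 1 F 0)
    (hF0 : F 0 = 0) (hr : r ≠ 0) (hu : ∀ᶠ s in 𝓝 r, ContDiffAt ℝ 2 u s ∧ ODEAt p q F u s)
    (h0 : u r = 0) (h0' : deriv u r = 0) : u =ᶠ[𝓝 r] 0 := by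
  obtain ⟨L, t, ht, hL⟩ := hF.exists_lipschitzOnWith
  set v : ℝ → ℝ × ℝ → ℝ × ℝ := fun s z => (z.2, F z.1 + q / s ^ 2 * z.1 - p / s * z.2)
  -- the coefficients are continuous at `r ≠ 0`, so one Lipschitz constant serves near `r`
  set K : ℝ → ℝ≥0 := fun s => max 1 (L + ‖q / s ^ 2‖₊ + ‖p / s‖₊)
  have hK : ContinuousAt K r := by fun_prop (disch := positivity)
  have hv : ∀ᶠ s in 𝓝 r, LipschitzOnWith (K r + 1) (v s) (t ×ˢ univ) := by
    filter_upwards [hK.eventually_lt continuousAt_const (lt_add_one (K r))] with s hs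
    exact (lipschitzOnWith_odeField hL _ _).weaken hs.le
  have hsol : ∀ᶠ s in 𝓝 r, HasDerivAt (fun s => (u s, deriv u s)) (v s (u s, deriv u s)) s ∧
      (u s, deriv u s) ∈ t ×ˢ univ := by
    have hut : ∀ᶠ s in 𝓝 r, u s ∈ t :=
      hu.self_of_nhds.1.continuousAt.preimage_mem_nhds (h0 ▸ ht)
    filter_upwards [hu, hut] with s ⟨hC, hode⟩ hs
    refine ⟨?_, hs, mem_univ _⟩
    have hdu := (hC.differentiableAt (by norm_num)).hasDerivAt
    have hddu := ((hC.derivWithin (m := 1) (by norm_num)).differentiableAt one_ne_zero).hasDerivAt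
    rw [odeAt_iff.mp hode] at hddu
    exact hdu.prodMk hddu
  have hzero : ∀ᶠ s in 𝓝 r,
      HasDerivAt (fun _ => (0 : ℝ × ℝ)) (v s 0) s ∧ (0 : ℝ × ℝ) ∈ t ×ˢ univ := by
    refine .of_forall fun s => ⟨?_, mem_of_mem_nhds ht, mem_univ _⟩
    have hv0 : v s 0 = 0 := by simp [v, hF0]
    rw [hv0]
    exact hasDerivAt_const s _
  filter_upwards [ODE_solution_unique_of_eventually hv hsol hzero (by simp [h0, h0'])] with s hs
  exact congrArg Prod.fst hs

lemma CondF.nonneg_of_le {F : ℝ → ℝ} {sp t : ℝ} (hF : CondF F sp) (ht : sp ≤ t) : 0 ≤ F t := by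
  rcases ht.eq_or_lt with rfl | ht
  · exact hF.2.2.1.ge
  · exact (hF.2.2.2.2.1 t ht).le

namespace IsBVPSolution

variable {p q sp : ℝ} {F u : ℝ → ℝ} {R : ℝ≥0∞} {r : ℝ}

lemma contDiffAt (hu : IsBVPSolution p q F sp R u) (hr : r ∈ realIoo R) : ContDiffAt ℝ 2 u r :=
  hu.2.1 r hr.1 hr.2

lemma odeAt (hu : IsBVPSolution p q F sp R u) (hr : r ∈ realIoo R) : ODEAt p q F u r :=
  hu.2.2.1 r hr.1 hr.2

lemma exists_forall_mem_of_mem_nhds (hu : IsBVPSolution p q F sp R u) (hR : 0 < R)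
    {U : Set ℝ} (hU : U ∈ 𝓝 sp) :
    ∃ B ∈ realIoo R, ∀ x, B ≤ x → ENNReal.ofReal x < R → u x ∈ U := by
  obtain ⟨-, -, -, -, hlim, hlimTop⟩ := hu
  rcases eq_or_ne R ⊤ with rfl | hRtop
  · obtain ⟨B, hB⟩ := eventually_atTop.mp (hlimTop rfl hU)
    exact ⟨max B 1, ⟨by positivity, ENNReal.ofReal_lt_top⟩,
      fun x hx _ => hB x (le_of_max_le_left hx)⟩
  · have hR' : 0 < R.toReal := ENNReal.toReal_pos hR.ne' hRtop
    have hlt : ∀ {x : ℝ}, 0 ≤ x → (ENNReal.ofReal x < R ↔ x < R.toReal) :=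
      fun hx => ENNReal.ofReal_lt_iff_lt_toReal hx hRtop
    obtain ⟨l, hl : l < R.toReal, hlU⟩ := mem_nhdsLT_iff_exists_Ioo_subset.mp
      (hlim _ hR' (ENNReal.ofReal_toReal hRtop).symm hU)
    set B := max (R.toReal / 2) ((l + R.toReal) / 2)
    have hB : 0 < B := lt_max_of_lt_left (by positivity)
    refine ⟨B, ⟨hB, (hlt hB.le).mpr (max_lt (by linarith) (by linarith))⟩, fun x hx hxR => ?_⟩
    exact hlU ⟨(by linarith : l < (l + R.toReal) / 2).trans_le ((le_max_right _ _).trans hx),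
      (hlt (hB.le.trans hx)).mp hxR⟩

lemma exists_isLocalMax_of_lt (hu : IsBVPSolution p q F sp R u) (hR : 0 < R) (hsp : 0 ≤ sp)
    (hr : r ∈ realIoo R) (hlt : sp < u r) :
    ∃ r₁ ∈ realIoo R, IsLocalMax u r₁ ∧ u r ≤ u r₁ := by
  obtain ⟨B, hB, hBU⟩ := hu.exists_forall_mem_of_mem_nhds hR (Iio_mem_nhds hlt)
  obtain ⟨hcont, -, -, hu0, -, -⟩ := hu
  set b := max B r
  have hb : ENNReal.ofReal b < R := by simpa [b] using ⟨hB.2, hr.2⟩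
  obtain ⟨r₁, hr₁, hr₁max⟩ := isCompact_Icc.exists_isMaxOn
    ⟨0, left_mem_Icc.mpr (hr.1.le.trans (le_max_right B r))⟩
    (hcont.mono fun x hx => ⟨hx.1, (ENNReal.ofReal_le_ofReal hx.2).trans_lt hb⟩)
  have hle : u r ≤ u r₁ := hr₁max ⟨hr.1.le, le_max_right B r⟩
  have hr₁I : r₁ ∈ realIoo R := by
    refine ⟨hr₁.1.lt_of_ne ?_, (ENNReal.ofReal_le_ofReal hr₁.2).trans_lt hb⟩
    rintro rfl
    linarith
  refine ⟨r₁, hr₁I, ?_, hle⟩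
  filter_upwards [(isOpen_realIoo R).mem_nhds hr₁I] with x hx
  rcases le_or_gt x b with hxb | hxb
  · exact hr₁max ⟨hx.1.le, hxb⟩
  · exact (hBU x ((le_max_left B r).trans hxb.le) hx.2).out.le.trans hle

lemma exists_isLocalMax_ge (hu : IsBVPSolution p q F sp R u) (hR : 0 < R) (hsp : 0 ≤ sp)
    (hr : r ∈ realIoo R) (hle : sp ≤ u r) :
    ∃ r₁ ∈ realIoo R, IsLocalMax u r₁ ∧ sp ≤ u r₁ := by
  by_cases h : ∃ r₂ ∈ realIoo R, sp < u r₂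
  · obtain ⟨r₂, hr₂, hlt⟩ := h
    obtain ⟨r₁, hr₁, hmax, hle₁⟩ := hu.exists_isLocalMax_of_lt hR hsp hr₂ hlt
    exact ⟨r₁, hr₁, hmax, hlt.le.trans hle₁⟩
  · push Not at h
    refine ⟨r, hr, ?_, hle⟩
    filter_upwards [(isOpen_realIoo R).mem_nhds hr] with x hx
    exact (h x hx).trans hle

lemma eventuallyEq_zero (hu : IsBVPSolution p q F sp R u) (hF : ContDiffAt ℝ 1 F 0)
    (hF0 : F 0 = 0) (hr : r ∈ realIoo R) (h0 : u r = 0) (h0' : deriv u r = 0) :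
    u =ᶠ[𝓝 r] 0 := by
  refine eventuallyEq_zero_of_odeAt (p := p) (q := q) hF hF0 hr.1.ne' ?_ h0 h0'
  filter_upwards [(isOpen_realIoo R).mem_nhds hr] with x hx
  exact ⟨hu.contDiffAt hx, hu.odeAt hx⟩

end IsBVPSolution

theorem stmt0_general (p q sp : ℝ) (hq : 0 < q) (hsp : 0 < sp)
    (F : ℝ → ℝ) (hF : CondF F sp)
    (R : ℝ≥0∞) (u : ℝ → ℝ)
    (hu : IsBVPSolution p q F sp R u)
    (hnn : ∀ r : ℝ, 0 < r → ENNReal.ofReal r < R → 0 ≤ u r) :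
    ∀ r : ℝ, 0 < r → ENNReal.ofReal r < R → 0 < u r ∧ u r < sp := by
  intro r hr hrR
  have hrI : r ∈ realIoo R := ⟨hr, hrR⟩
  have hR : 0 < R := bot_le.trans_lt hrR
  constructor
  · by_contra! hle
    have hur : u r = 0 := le_antisymm hle (hnn r hr hrR)
    have hmin : IsLocalMin u r := by
      filter_upwards [(isOpen_realIoo R).mem_nhds hrI] with x hx
      exact hur ▸ hnn x hx.1 hx.2
    have hC : ∀ x ∈ realIoo R, ContinuousAt u x ∧ ContinuousAt (deriv u) x := fun x hx =>
      have hCx := hu.contDiffAt hx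
      ⟨hCx.continuousAt, (hCx.derivWithin (m := 1) (by norm_num)).continuousAt⟩
    have hloc := fun x (hx : x ∈ realIoo R) => hu.eventuallyEq_zero hF.1.contDiffAt hF.2.1 hx
    have hzero := (isPreconnected_realIoo R).eqOn_zero_of_eventuallyEq_zero hC hloc hrI
      (hloc r hrI hur hmin.deriv_eq_zero)
    obtain ⟨B, hB, hBU⟩ := hu.exists_forall_mem_of_mem_nhds hR (compl_singleton_mem_nhds hsp.ne')
    exact hBU B le_rfl hB.2 (hzero hB)
  · by_contra! hge
    obtain ⟨r₁, hr₁, hmax, hle⟩ := hu.exists_isLocalMax_ge hR hsp.le hrI hge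
    exact (hu.odeAt hr₁).not_isLocalMax hq hr₁.1 (hsp.trans_le hle) (hF.nonneg_of_le hle)
      (hu.contDiffAt hr₁).continuousAt hmax

/-- a non-negative solution of (⋆)&(BC) satisfies `0 < u < s₊` on `(0,R)`. -/
theorem stmt0 (p q sp : ℝ) (hp : 0 ≤ p) (hq : 0 < q) (hsp : 0 < sp)
    (F : ℝ → ℝ) (hF : CondF F sp)
    (R : ℝ≥0∞) (hR : 0 < R) (u : ℝ → ℝ)
    (hu : IsBVPSolution p q F sp R u)
    (hnn : ∀ r : ℝ, 0 < r → ENNReal.ofReal r < R → 0 ≤ u r) :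
    ∀ r : ℝ, 0 < r → ENNReal.ofReal r < R → 0 < u r ∧ u r < sp :=
  stmt0_general p q sp hq hsp F hF R u hu hnn
end

section
/- Suppose ū is a super-solution of (⋆) on (0,∞) with 0 ≤ ū ≤ s_+ and ū(r) = ᾱ·r^{γ_+} + o(r^{γ_+}) as r → 0 for some ᾱ > 0; then ū(r) > 0 for all r ∈ (0,∞). Suppose u̲ is a sub-solution of (⋆) on (0,∞) with 0 ≤ u̲ ≤ s_+ and u̲(r) = s_+ − β̲·r^{−2} + o(r^{−2}) as r → ∞ for some β̲ > 0; then u̲(r) < s_+ for all r ∈ (0,∞). -/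
open Set Filter Topology MeasureTheory
open scoped ENNReal NNReal

/-- `ψ` is locally Lipschitz on the set `I`. -/
def LocLipOn (I : Set ℝ) (ψ : ℝ → ℝ) : Prop :=
  ∀ x ∈ I, ∃ K : ℝ≥0, ∃ t ∈ nhdsWithin x I, LipschitzOnWith K ψ t

/-- `ψ` is a locally Lipschitz, piecewise `C²` super-solution of (⋆) on `I`:
outside a locally finite set `S` of jump points it is `C²` and satisfies
`ψ'' + (p/r)ψ' - (q/r²)ψ ≤ F(ψ)`, and at each jump point the one-sided
derivatives exist with `ψ'(r₀⁻) > ψ'(r₀⁺)`. -/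
def IsSuperSolutionOn (p q : ℝ) (F : ℝ → ℝ) (I : Set ℝ) (ψ : ℝ → ℝ) : Prop :=
  LocLipOn I ψ ∧
    ∃ S : Set ℝ,
      (∀ x ∈ I, ∃ ε > 0, (S ∩ Set.Ioo (x - ε) (x + ε)).Finite) ∧
      (∀ x ∈ I \ S, ContDiffAt ℝ 2 ψ x ∧
        deriv (deriv ψ) x + (p / x) * deriv ψ x - (q / x ^ 2) * ψ x ≤ F (ψ x)) ∧
      (∀ x ∈ I ∩ S, ∃ dl dr : ℝ, HasDerivWithinAt ψ dl (Set.Iio x) x ∧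
        HasDerivWithinAt ψ dr (Set.Ioi x) x ∧ dr < dl)

/-- `ψ` is a locally Lipschitz, piecewise `C²` sub-solution of (⋆) on `I`. -/
def IsSubSolutionOn (p q : ℝ) (F : ℝ → ℝ) (I : Set ℝ) (ψ : ℝ → ℝ) : Prop :=
  LocLipOn I ψ ∧
    ∃ S : Set ℝ,
      (∀ x ∈ I, ∃ ε > 0, (S ∩ Set.Ioo (x - ε) (x + ε)).Finite) ∧
      (∀ x ∈ I \ S, ContDiffAt ℝ 2 ψ x ∧
        F (ψ x) ≤ deriv (deriv ψ) x + (p / x) * deriv ψ x - (q / x ^ 2) * ψ x) ∧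
      (∀ x ∈ I ∩ S, ∃ dl dr : ℝ, HasDerivWithinAt ψ dl (Set.Iio x) x ∧
        HasDerivWithinAt ψ dr (Set.Ioi x) x ∧ dl < dr)

/-- `u(r) = α·r^γ + o(r^γ)` as `r → 0⁺`. -/
def AsympZero (u : ℝ → ℝ) (α γ : ℝ) : Prop :=
  Filter.Tendsto (fun r : ℝ => (u r - α * r ^ γ) / r ^ γ) (nhdsWithin 0 (Set.Ioi 0)) (nhds 0)

/-- `u(r) = sp - β·r⁻² + o(r⁻²)` as `r → ∞`. -/
def AsympInfty (u : ℝ → ℝ) (sp β : ℝ) : Prop :=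
  Filter.Tendsto (fun r : ℝ => (u r - (sp - β / r ^ 2)) * r ^ 2) Filter.atTop (nhds 0)

/-!
Both halves are instances of the strong minimum principle for `ψ'' + B ψ' - C ψ ≤ 0` with
continuous `B` and `C ≥ 0`, for piecewise `C²` functions `ψ` whose derivative only jumps
downwards: a nonnegative supersolution vanishing at one point vanishes identically. Since
`F ≤ 0` on `[0, s₊]`, `ū` is such a supersolution with `B = p/r`, `C = q/r²`; and `s₊ - u̲` is
one with `C = q/r² + K`, `K` a Lipschitz constant of `F` on `[0, s₊]` (this uses `q s₊ ≥ 0`).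
Vanishing identically contradicts the asymptotics at `0`, resp. at `∞`.

The minimum principle reduces to Hopf's boundary point lemma: if `ψ(r₀) = 0 < ψ(b)`, then
comparing `ψ` on `[r₀, b]` with the barrier `ε (e^{(M+1)(r - r₀)} - 1)`, a strict subsolution
when `|B|, C ≤ M`, forces `ψ'(r₀⁺) > 0`; but at an interior zero of `ψ ≥ 0` the one-sided
derivatives satisfy `ψ'(r₀⁺) ≤ ψ'(r₀⁻) ≤ 0`. The mirror case `b < r₀` follows by the reflection
`r ↦ -r`.
-/

lemma HasDerivWithinAt.nonpos_of_eventually_nhdsLT {f : ℝ → ℝ} {c d : ℝ}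
    (hf : HasDerivWithinAt f d (Iio c) c) (h : ∀ᶠ x in 𝓝[<] c, f c ≤ f x) : d ≤ 0 := by
  rw [hasDerivWithinAt_iff_tendsto_slope, sdiff_singleton_eq_self self_notMem_Iio] at hf
  refine le_of_tendsto hf ?_
  filter_upwards [h, self_mem_nhdsWithin] with x hfx hx
  rw [slope_def_field]
  exact div_nonpos_of_nonneg_of_nonpos (sub_nonneg.2 hfx) (sub_nonpos.2 (le_of_lt hx))

lemma HasDerivWithinAt.nonneg_of_eventually_nhdsGT {f : ℝ → ℝ} {c d : ℝ}
    (hf : HasDerivWithinAt f d (Ioi c) c) (h : ∀ᶠ x in 𝓝[>] c, f c ≤ f x) : 0 ≤ d := by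
  rw [hasDerivWithinAt_iff_tendsto_slope, sdiff_singleton_eq_self self_notMem_Ioi] at hf
  refine ge_of_tendsto hf ?_
  filter_upwards [h, self_mem_nhdsWithin] with x hfx hx
  rw [slope_def_field]
  exact div_nonneg (sub_nonneg.2 hfx) (sub_nonneg.2 (le_of_lt hx))

lemma HasDerivWithinAt.comp_neg {f : ℝ → ℝ} {f' x : ℝ} {s : Set ℝ}
    (hf : HasDerivWithinAt f f' s (-x)) : HasDerivWithinAt (fun y => f (-y)) (-f') (-s) x := by
  have := hf.scomp x ((hasDerivAt_neg x).hasDerivWithinAt (s := -s)) fun _ hy => hy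
  rwa [neg_one_smul] at this

lemma IsLocalMin.deriv_deriv_nonneg {f : ℝ → ℝ} {c : ℝ} (hmin : IsLocalMin f c)
    (hc : ContinuousAt f c) : 0 ≤ deriv (deriv f) c := by
  by_contra! hneg
  have hmax : IsLocalMax f c := isLocalMax_of_deriv_deriv_neg hneg hmin.deriv_eq_zero hc
  have hconst : f =ᶠ[𝓝 c] fun _ => f c := by
    filter_upwards [hmin, hmax] with x h₁ h₂ using le_antisymm h₂ h₁
  have hderiv : deriv f =ᶠ[𝓝 c] fun _ => 0 := by
    simpa using hconst.deriv
  simp [hderiv.deriv_eq] at hneg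

lemma deriv_deriv_sub {f g : ℝ → ℝ} {x : ℝ} (hf : ContDiffAt ℝ 2 f x) (hg : ContDiffAt ℝ 2 g x) :
    deriv (deriv (f - g)) x = deriv (deriv f) x - deriv (deriv g) x := by
  simpa only [iteratedDeriv_succ, iteratedDeriv_zero] using iteratedDeriv_sub hf hg

lemma exists_bound_Icc {B C : ℝ → ℝ} {a b : ℝ} (hB : ContinuousOn B (Icc a b))
    (hC : ContinuousOn C (Icc a b)) : ∃ M, ∀ x ∈ Icc a b, |B x| ≤ M ∧ C x ≤ M := by
  obtain ⟨M₁, hM₁⟩ := isCompact_Icc.exists_bound_of_continuousOn hB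
  obtain ⟨M₂, hM₂⟩ := isCompact_Icc.exists_bound_of_continuousOn hC
  refine ⟨max M₁ M₂, fun x hx => ⟨(hM₁ x hx).trans (le_max_left _ _), ?_⟩⟩
  exact (le_abs_self _).trans ((hM₂ x hx).trans (le_max_right _ _))

noncomputable def expBarrier (ε α r₀ y : ℝ) : ℝ := ε * (Real.exp (α * (y - r₀)) - 1)

section expBarrier

variable (ε α r₀ : ℝ)

lemma hasDerivAt_expBarrier (y : ℝ) :
    HasDerivAt (expBarrier ε α r₀) (ε * α * Real.exp (α * (y - r₀))) y := by
  have := ((((hasDerivAt_id' y).sub_const r₀).const_mul α).exp.sub_const 1).const_mul ε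
  exact this.congr_deriv (by ring)

lemma deriv_expBarrier :
    deriv (expBarrier ε α r₀) = fun y => ε * α * Real.exp (α * (y - r₀)) :=
  funext fun y => (hasDerivAt_expBarrier ε α r₀ y).deriv

lemma deriv_deriv_expBarrier (y : ℝ) :
    deriv (deriv (expBarrier ε α r₀)) y = ε * α ^ 2 * Real.exp (α * (y - r₀)) := by
  have := (((hasDerivAt_id' y).sub_const r₀).const_mul α).exp.const_mul (ε * α)
  rw [deriv_expBarrier, this.deriv]
  ring

lemma contDiff_expBarrier : ContDiff ℝ 2 (expBarrier ε α r₀) := by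
  unfold expBarrier
  fun_prop

lemma expBarrier_strictSubsolution {ε M B C : ℝ} (hε : 0 < ε) (hB : |B| ≤ M) (hC : 0 ≤ C)
    (hCM : C ≤ M) (y : ℝ) :
    0 < deriv (deriv (expBarrier ε (M + 1) r₀)) y + B * deriv (expBarrier ε (M + 1) r₀) y
      - C * expBarrier ε (M + 1) r₀ y := by
  rw [deriv_deriv_expBarrier, deriv_expBarrier, expBarrier]
  set E := Real.exp ((M + 1) * (y - r₀))
  have hE : 0 < ε * E := mul_pos hε (Real.exp_pos _)
  have hM : 0 ≤ M := (abs_nonneg B).trans hB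
  -- `(M + 1)² - M (M + 1) - M = 1`
  have hrate : 1 ≤ (M + 1) ^ 2 + B * (M + 1) - C := by
    nlinarith [neg_abs_le B]
  calc 0 < ε * E * 1 + C * ε := by nlinarith
    _ ≤ ε * E * ((M + 1) ^ 2 + B * (M + 1) - C) + C * ε := by gcongr
    _ = _ := by ring

end expBarrier

def IsLinearSupersolutionOn (B C : ℝ → ℝ) (U : Set ℝ) (ψ : ℝ → ℝ) : Prop :=
  ∀ x ∈ U, (ContDiffAt ℝ 2 ψ x ∧ deriv (deriv ψ) x + B x * deriv ψ x - C x * ψ x ≤ 0) ∨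
    ∃ dl dr, HasDerivWithinAt ψ dl (Iio x) x ∧ HasDerivWithinAt ψ dr (Ioi x) x ∧ dr < dl

namespace IsLinearSupersolutionOn

variable {B C ψ : ℝ → ℝ} {U : Set ℝ}

lemma mono {V : Set ℝ} (h : IsLinearSupersolutionOn B C U ψ) (hVU : V ⊆ U) :
    IsLinearSupersolutionOn B C V ψ :=
  fun x hx => h x (hVU hx)

lemma exists_hasDerivWithinAt (h : IsLinearSupersolutionOn B C U ψ) {x : ℝ} (hx : x ∈ U) :
    ∃ dl dr, HasDerivWithinAt ψ dl (Iio x) x ∧ HasDerivWithinAt ψ dr (Ioi x) x ∧ dr ≤ dl := by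
  rcases h x hx with ⟨hsmooth, -⟩ | ⟨dl, dr, hdl, hdr, hlt⟩
  · have hd := (hsmooth.differentiableAt two_ne_zero).hasDerivAt
    exact ⟨_, _, hd.hasDerivWithinAt, hd.hasDerivWithinAt, le_rfl⟩
  · exact ⟨dl, dr, hdl, hdr, hlt.le⟩

lemma continuousAt (h : IsLinearSupersolutionOn B C U ψ) {x : ℝ} (hx : x ∈ U) :
    ContinuousAt ψ x := by
  obtain ⟨dl, dr, hdl, hdr, -⟩ := h.exists_hasDerivWithinAt hx
  exact continuousAt_iff_continuous_left'_right'.2 ⟨hdl.continuousWithinAt, hdr.continuousWithinAt⟩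

lemma continuousOn (h : IsLinearSupersolutionOn B C U ψ) : ContinuousOn ψ U :=
  fun _ hx => (h.continuousAt hx).continuousWithinAt

lemma not_isLocalMin_sub (h : IsLinearSupersolutionOn B C U ψ) {v : ℝ → ℝ} {c : ℝ} (hc : c ∈ U)
    (hv : ContDiffAt ℝ 2 v c)
    (hLv : 0 < deriv (deriv v) c + B c * deriv v c - C c * v c) (hC : 0 ≤ C c)
    (hlt : ψ c < v c) : ¬IsLocalMin (ψ - v) c := by
  intro hmin
  have hvd := (hv.differentiableAt two_ne_zero).hasDerivAt
  rcases h c hc with ⟨hψ, hLψ⟩ | ⟨dl, dr, hdl, hdr, hlt⟩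
  · have hψd := hψ.differentiableAt two_ne_zero
    have hd : deriv ψ c = deriv v c := by
      have := hmin.deriv_eq_zero
      rw [deriv_sub hψd hvd.differentiableAt] at this
      linarith
    have hdd := hmin.deriv_deriv_nonneg (hψ.continuousAt.sub hv.continuousAt)
    rw [deriv_deriv_sub hψ hv] at hdd
    have : C c * (ψ c - v c) ≤ 0 := mul_nonpos_of_nonneg_of_nonpos hC (sub_nonpos.2 hlt.le)
    rw [hd] at hLψ
    linarith
  · have h₁ := (hdl.sub hvd.hasDerivWithinAt).nonpos_of_eventually_nhdsLT
      (hmin.filter_mono nhdsWithin_le_nhds)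
    have h₂ := (hdr.sub hvd.hasDerivWithinAt).nonneg_of_eventually_nhdsGT
      (hmin.filter_mono nhdsWithin_le_nhds)
    linarith

lemma comp_neg (h : IsLinearSupersolutionOn B C U ψ) :
    IsLinearSupersolutionOn (fun x => -B (-x)) (fun x => C (-x)) (-U) (fun x => ψ (-x)) := by
  intro x hx
  rcases h (-x) hx with ⟨hψ, hL⟩ | ⟨dl, dr, hdl, hdr, hlt⟩
  · refine Or.inl ⟨hψ.comp x contDiff_neg.contDiffAt, ?_⟩
    have hd : deriv (fun y => ψ (-y)) = fun y => -deriv ψ (-y) :=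
      funext fun y => deriv_comp_neg ψ y
    rw [hd, deriv.fun_neg, deriv_comp_neg]
    linarith
  · refine Or.inr ⟨-dr, -dl, ?_, ?_, neg_lt_neg hlt⟩
    · simpa using hdr.comp_neg
    · simpa using hdl.comp_neg

theorem hopf_right {r₀ b M d : ℝ} (h : IsLinearSupersolutionOn B C (Ioo r₀ b) ψ)
    (hcont : ContinuousOn ψ (Icc r₀ b))
    (hBC : ∀ x ∈ Ioo r₀ b, |B x| ≤ M ∧ C x ≤ M) (hC : ∀ x ∈ Ioo r₀ b, 0 ≤ C x)
    (hr₀b : r₀ < b) (hψr₀ : ψ r₀ = 0) (hψb : 0 < ψ b)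
    (hd : HasDerivWithinAt ψ d (Ioi r₀) r₀) : 0 < d := by
  obtain ⟨m, hm⟩ := nonempty_Ioo.2 hr₀b
  have hM : 0 ≤ M := (abs_nonneg _).trans (hBC m hm).1
  have hEb : 1 < Real.exp ((M + 1) * (b - r₀)) :=
    Real.one_lt_exp_iff.2 (mul_pos (by linarith) (sub_pos.2 hr₀b))
  set ε := ψ b / (Real.exp ((M + 1) * (b - r₀)) - 1)
  have hε : 0 < ε := div_pos hψb (sub_pos.2 hEb)
  set v := expBarrier ε (M + 1) r₀
  have hvr₀ : v r₀ = 0 := by simp [v, expBarrier]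
  have hvb : v b = ψ b := by
    simp only [v, expBarrier, ε]
    field_simp [(sub_pos.2 hEb).ne']
  obtain ⟨c, hc, hcmin⟩ : ∃ c ∈ Icc r₀ b, IsMinOn (ψ - v) (Icc r₀ b) c :=
    isCompact_Icc.exists_isMinOn (nonempty_Icc.2 hr₀b.le)
      (hcont.sub (contDiff_expBarrier ε (M + 1) r₀).continuous.continuousOn)
  by_cases hneg : ψ c < v c
  · have hcr₀ : c ≠ r₀ := by rintro rfl; linarith
    have hcb : c ≠ b := by rintro rfl; linarith
    have hcI : c ∈ Ioo r₀ b := ⟨lt_of_le_of_ne hc.1 hcr₀.symm, lt_of_le_of_ne hc.2 hcb⟩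
    exact absurd (hcmin.isLocalMin (Icc_mem_nhds hcI.1 hcI.2))
      (h.not_isLocalMin_sub hcI (contDiff_expBarrier ε (M + 1) r₀).contDiffAt
        (expBarrier_strictSubsolution r₀ hε (hBC c hcI).1 (hC c hcI) (hBC c hcI).2 c)
        (hC c hcI) hneg)
  · have hslope := (hd.sub (hasDerivAt_expBarrier ε (M + 1) r₀ r₀).hasDerivWithinAt
      ).nonneg_of_eventually_nhdsGT (by
        filter_upwards [Ioo_mem_nhdsGT hr₀b] with x hx
        have := hcmin ⟨hx.1.le, hx.2.le⟩
        simp only [mem_ofPred_eq, Pi.sub_apply, hψr₀] at this ⊢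
        linarith)
    simp only [sub_self, mul_zero, Real.exp_zero, mul_one] at hslope
    nlinarith

theorem hopf_left {a r₀ M d : ℝ} (h : IsLinearSupersolutionOn B C (Ioo a r₀) ψ)
    (hcont : ContinuousOn ψ (Icc a r₀))
    (hBC : ∀ x ∈ Ioo a r₀, |B x| ≤ M ∧ C x ≤ M) (hC : ∀ x ∈ Ioo a r₀, 0 ≤ C x)
    (har₀ : a < r₀) (hψr₀ : ψ r₀ = 0) (hψa : 0 < ψ a)
    (hd : HasDerivWithinAt ψ d (Iio r₀) r₀) : d < 0 := by
  have hrefl := h.comp_neg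
  rw [neg_Ioo] at hrefl
  have hd' : HasDerivWithinAt ψ d (Iio r₀) (-(-r₀)) := by rwa [neg_neg]
  have := hrefl.hopf_right (M := M)
    (hcont.comp continuous_neg.continuousOn fun x hx => by simpa [← neg_Icc] using hx)
    (fun x hx => by simpa using hBC (-x) (by simpa [← neg_Ioo] using hx))
    (fun x hx => hC (-x) (by simpa [← neg_Ioo] using hx))
    (neg_lt_neg har₀) (by simpa) (by simpa) (by simpa using hd'.comp_neg)
  linarith

theorem eqOn_zero_of_nonneg (h : IsLinearSupersolutionOn B C U ψ) (hU : IsOpen U)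
    (hUc : U.OrdConnected) (hB : ContinuousOn B U) (hC : ContinuousOn C U)
    (hC0 : ∀ x ∈ U, 0 ≤ C x) (hψ0 : ∀ x ∈ U, 0 ≤ ψ x) {r₀ : ℝ} (hr₀ : r₀ ∈ U)
    (hψr₀ : ψ r₀ = 0) : EqOn ψ 0 U := by
  intro x hx
  by_contra hne
  have hpos : 0 < ψ x := lt_of_le_of_ne (hψ0 x hx) (Ne.symm hne)
  obtain ⟨dl, dr, hdl, hdr, hle⟩ := h.exists_hasDerivWithinAt hr₀
  have hmin : ∀ᶠ y in 𝓝 r₀, ψ r₀ ≤ ψ y := by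
    filter_upwards [hU.mem_nhds hr₀] with y hy
    rw [hψr₀]
    exact hψ0 y hy
  have hdl0 := hdl.nonpos_of_eventually_nhdsLT (nhdsWithin_le_nhds hmin)
  have hdr0 := hdr.nonneg_of_eventually_nhdsGT (nhdsWithin_le_nhds hmin)
  have hbound : ∀ {a b : ℝ}, Icc a b ⊆ U → ∃ M, ∀ y ∈ Ioo a b, |B y| ≤ M ∧ C y ≤ M :=
    fun hsub => (exists_bound_Icc (hB.mono hsub) (hC.mono hsub)).imp
      fun _ hM y hy => hM y (Ioo_subset_Icc_self hy)
  rcases lt_trichotomy x r₀ with hxr | rfl | hxr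
  · have hsub := hUc.out hx hr₀
    obtain ⟨M, hM⟩ := hbound hsub
    have := hopf_left (h.mono (Ioo_subset_Icc_self.trans hsub)) (h.continuousOn.mono hsub) hM
      (fun y hy => hC0 y (hsub (Ioo_subset_Icc_self hy))) hxr hψr₀ hpos hdl
    linarith
  · exact hne hψr₀
  · have hsub := hUc.out hr₀ hx
    obtain ⟨M, hM⟩ := hbound hsub
    have := hopf_right (h.mono (Ioo_subset_Icc_self.trans hsub)) (h.continuousOn.mono hsub) hM
      (fun y hy => hC0 y (hsub (Ioo_subset_Icc_self hy))) hxr hψr₀ hpos hdr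
    linarith

end IsLinearSupersolutionOn

lemma CondF.nonpos_of_mem_Icc {F : ℝ → ℝ} {sp t : ℝ} (hF : CondF F sp) (ht : t ∈ Icc 0 sp) :
    F t ≤ 0 := by
  obtain ⟨-, hF0, hFsp, hFneg, -, -⟩ := hF
  rcases ht.1.eq_or_lt with rfl | h0
  · exact hF0.le
  rcases ht.2.eq_or_lt with rfl | hs
  · exact hFsp.le
  exact (hFneg t ⟨h0, hs⟩).le

lemma CondF.exists_neg_le_mul_sub {F : ℝ → ℝ} {sp : ℝ} (hF : CondF F sp) (hsp : 0 ≤ sp) :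
    ∃ K : ℝ≥0, ∀ t ∈ Icc 0 sp, -F t ≤ K * (sp - t) := by
  obtain ⟨hFC, -, hFsp, -, -, -⟩ := hF
  obtain ⟨K, hK⟩ := hFC.contDiffOn.exists_lipschitzOnWith one_ne_zero (convex_Icc 0 sp)
    isCompact_Icc
  refine ⟨K, fun t ht => ?_⟩
  have := hK.dist_le_mul sp (right_mem_Icc.2 hsp) t ht
  rw [Real.dist_eq, Real.dist_eq, hFsp, zero_sub, abs_neg, abs_of_nonneg (sub_nonneg.2 ht.2)]
    at this
  exact (neg_le_abs _).trans this

section RadialOperator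

variable {p q K : ℝ} {F ψ : ℝ → ℝ} {I : Set ℝ}

lemma IsSuperSolutionOn.isLinearSupersolutionOn (h : IsSuperSolutionOn p q F I ψ)
    (hF : ∀ x ∈ I, F (ψ x) ≤ K * ψ x) :
    IsLinearSupersolutionOn (fun x => p / x) (fun x => q / x ^ 2 + K) I ψ := by
  obtain ⟨-, S, -, hsmooth, hcorner⟩ := h
  intro x hx
  by_cases hxS : x ∈ S
  · exact Or.inr (hcorner x ⟨hx, hxS⟩)
  · obtain ⟨hψ, hL⟩ := hsmooth x ⟨hx, hxS⟩
    refine Or.inl ⟨hψ, ?_⟩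
    linarith [hF x hx]

lemma IsSubSolutionOn.isLinearSupersolutionOn_const_sub (h : IsSubSolutionOn p q F I ψ)
    {s : ℝ} (hqs : 0 ≤ q * s) (hFK : ∀ x ∈ I, -F (ψ x) ≤ K * (s - ψ x)) :
    IsLinearSupersolutionOn (fun x => p / x) (fun x => q / x ^ 2 + K) I (fun x => s - ψ x) := by
  obtain ⟨-, S, -, hsmooth, hcorner⟩ := h
  intro x hx
  by_cases hxS : x ∈ S
  · obtain ⟨dl, dr, hdl, hdr, hlt⟩ := hcorner x ⟨hx, hxS⟩
    exact Or.inr ⟨-dl, -dr, hdl.const_sub s, hdr.const_sub s, neg_lt_neg hlt⟩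
  · obtain ⟨hψ, hL⟩ := hsmooth x ⟨hx, hxS⟩
    refine Or.inl ⟨contDiffAt_const.sub hψ, ?_⟩
    have hd : deriv (fun y => s - ψ y) = fun y => -deriv ψ y := funext fun y => deriv_const_sub s
    have hsource : 0 ≤ q / x ^ 2 * s := by
      rw [div_mul_eq_mul_div]
      exact div_nonneg hqs (sq_nonneg x)
    rw [hd, deriv.fun_neg]
    linarith [hFK x hx]

lemma IsLinearSupersolutionOn.eqOn_zero_of_nonneg_Ioi
    (h : IsLinearSupersolutionOn (fun x => p / x) (fun x => q / x ^ 2 + K) (Ioi 0) ψ)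
    (hq : 0 ≤ q) (hK : 0 ≤ K) (hψ0 : ∀ x ∈ Ioi (0 : ℝ), 0 ≤ ψ x) {r : ℝ} (hr : r ∈ Ioi (0 : ℝ))
    (hψr : ψ r = 0) : EqOn ψ 0 (Ioi 0) :=
  h.eqOn_zero_of_nonneg isOpen_Ioi ordConnected_Ioi
    (continuousOn_const.div continuousOn_id fun _ hx => ne_of_gt hx)
    ((continuousOn_const.div (continuousOn_id.pow 2) fun _ hx => pow_ne_zero 2 (ne_of_gt hx)).add
      continuousOn_const)
    (fun x _ => add_nonneg (div_nonneg hq (sq_nonneg x)) hK) hψ0 hr hψr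

end RadialOperator

lemma AsympZero.eq_zero_of_eqOn_zero {u : ℝ → ℝ} {α γ : ℝ} (h : AsympZero u α γ)
    (hu : EqOn u 0 (Ioi 0)) : α = 0 := by
  have hconst : (fun r : ℝ => (u r - α * r ^ γ) / r ^ γ) =ᶠ[𝓝[>] 0] fun _ => -α := by
    filter_upwards [self_mem_nhdsWithin] with r hr
    rw [hu hr, Pi.zero_apply, zero_sub, neg_div, mul_div_cancel_right₀ _
      (Real.rpow_pos_of_pos hr γ).ne']
  simpa using tendsto_nhds_unique (h.congr' hconst) tendsto_const_nhds

lemma AsympInfty.eq_zero_of_eqOn_const {u : ℝ → ℝ} {s β : ℝ} (h : AsympInfty u s β)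
    (hu : EqOn u (fun _ => s) (Ioi 0)) : β = 0 := by
  have hconst : (fun r : ℝ => (u r - (s - β / r ^ 2)) * r ^ 2) =ᶠ[atTop] fun _ => β := by
    filter_upwards [eventually_gt_atTop 0] with r hr
    rw [hu hr, sub_sub_cancel, div_mul_cancel₀ _ (pow_pos hr 2).ne']
  exact tendsto_nhds_unique tendsto_const_nhds (h.congr' hconst)

theorem stmt1_general (p q sp : ℝ) (hq : 0 < q)
    (F : ℝ → ℝ) (hF : CondF F sp) :
    (∀ (ub : ℝ → ℝ) (αb : ℝ), IsSuperSolutionOn p q F (Set.Ioi 0) ub →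
      (∀ r ∈ Set.Ioi (0:ℝ), 0 ≤ ub r ∧ ub r ≤ sp) → 0 < αb →
      AsympZero ub αb (gammaPlus p q) →
      ∀ r ∈ Set.Ioi (0:ℝ), 0 < ub r) ∧
    (∀ (lb : ℝ → ℝ) (βl : ℝ), IsSubSolutionOn p q F (Set.Ioi 0) lb →
      (∀ r ∈ Set.Ioi (0:ℝ), 0 ≤ lb r ∧ lb r ≤ sp) → 0 < βl →
      AsympInfty lb sp βl →
      ∀ r ∈ Set.Ioi (0:ℝ), lb r < sp) := by
  refine ⟨fun ub αb hub hbnd hα hasymp r hr => ?_, fun lb βl hlb hbnd hβ hasymp r hr => ?_⟩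
  · by_contra! hr0
    have hlin := hub.isLinearSupersolutionOn (K := 0) fun x hx => by
      simpa using hF.nonpos_of_mem_Icc (hbnd x hx)
    have hzero := hlin.eqOn_zero_of_nonneg_Ioi hq.le le_rfl (fun x hx => (hbnd x hx).1) hr
      (le_antisymm hr0 (hbnd r hr).1)
    exact hα.ne' (hasymp.eq_zero_of_eqOn_zero hzero)
  · by_contra! hr0
    have hsp : 0 ≤ sp := (hbnd r hr).1.trans (hbnd r hr).2
    obtain ⟨K, hK⟩ := hF.exists_neg_le_mul_sub hsp
    have hlin := hlb.isLinearSupersolutionOn_const_sub (mul_nonneg hq.le hsp)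
      fun x hx => hK _ (hbnd x hx)
    have hzero := hlin.eqOn_zero_of_nonneg_Ioi hq.le K.2 (fun x hx => sub_nonneg.2 (hbnd x hx).2)
      hr (sub_eq_zero.2 (le_antisymm hr0 (hbnd r hr).2))
    exact hβ.ne' (hasymp.eq_zero_of_eqOn_const fun x hx => (sub_eq_zero.1 (hzero hx)).symm)

/-- a super-solution with the stated behaviour at `0` is positive on `(0,∞)`,
and a sub-solution with the stated behaviour at `∞` stays below `s₊` on `(0,∞)`. -/
theorem stmt1 (p q sp : ℝ) (hp : 0 ≤ p) (hq : 0 < q) (hsp : 0 < sp)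
    (F : ℝ → ℝ) (hF : CondF F sp) :
    (∀ (ub : ℝ → ℝ) (αb : ℝ), IsSuperSolutionOn p q F (Set.Ioi 0) ub →
      (∀ r ∈ Set.Ioi (0:ℝ), 0 ≤ ub r ∧ ub r ≤ sp) → 0 < αb →
      AsympZero ub αb (gammaPlus p q) →
      ∀ r ∈ Set.Ioi (0:ℝ), 0 < ub r) ∧
    (∀ (lb : ℝ → ℝ) (βl : ℝ), IsSubSolutionOn p q F (Set.Ioi 0) lb →
      (∀ r ∈ Set.Ioi (0:ℝ), 0 ≤ lb r ∧ lb r ≤ sp) → 0 < βl →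
      AsympInfty lb sp βl →
      ∀ r ∈ Set.Ioi (0:ℝ), lb r < sp) :=
  stmt1_general p q sp hq F hF
end

section
/- Let ū be a super-solution and u̲ a sub-solution of (⋆) on (0,∞) such that: 0 ≤ ū, u̲ ≤ s_+ on (0,∞); ū(r) = ᾱ·r^{γ_+} + o(r^{γ_+}) and u̲(r) = α̲·r^{γ_+} + o(r^{γ_+}) as r → 0, with ᾱ > 0; and ū(r) = s_+ − β̄·r^{−2} + o(r^{−2}) and u̲(r) = s_+ − β̲·r^{−2} + o(r^{−2}) as r → ∞, with β̲ > 0. Fix θ ∈ (0,1] and set ū_θ(r) := ū(r/θ). If ū_θ(r) ≥ u̲(r) for all r ∈ (0,∞) and ū_θ(r₀) = u̲(r₀) for some r₀ ∈ (0,∞), then θ = 1 and ū ≡ u̲ on (0,∞). -/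
/-!
Write `L u = u'' + (p/r) u' - (q/r²) u`. Rescaling by `θ ≤ 1` keeps `ū` a super-solution, since
`L[ū(·/θ)](r) = θ⁻² L[ū](r/θ)` and `F(ū) ≤ 0`. The difference `w = ū(·/θ) - u̲ ≥ 0` vanishes at
`r₀`. At a zero of `w` neither function has a corner (the corners of a super-solution are concave,
those of a sub-solution convex, and `w` has a minimum there), so near it both are `C²` and
`L w ≤ K w` with `K` a Lipschitz constant of `F` on `[0, s₊]`. With the integrating factor `r ^ p`
this reads `(r ^ p w')' ≤ C w` locally, which forces `w` to vanish near each of its zeros; hence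
`w ≡ 0` by connectedness. Finally `0 < ū < s₊`, so `F(ū) < 0`, near `0`, and at a regular point
there `F(ū) ≤ L[ū(·/θ)] = θ⁻² L[ū] ≤ θ⁻² F(ū)`, which forces `θ ≥ 1`.
-/

open Set Filter Topology MeasureTheory
open scoped ENNReal NNReal

noncomputable def radialOp (p q : ℝ) (u : ℝ → ℝ) (r : ℝ) : ℝ :=
  deriv (deriv u) r + p / r * deriv u r - q / r ^ 2 * u r

lemma ContDiffAt.differentiableAt_deriv {f : ℝ → ℝ} {x : ℝ} (hf : ContDiffAt ℝ 2 f x) :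
    DifferentiableAt ℝ (deriv f) x :=
  (hf.derivWithin (m := 1) (by norm_num)).differentiableAt one_ne_zero

lemma radialOp_sub {p q r : ℝ} {u v : ℝ → ℝ} (hu : ContDiffAt ℝ 2 u r)
    (hv : ContDiffAt ℝ 2 v r) :
    radialOp p q (u - v) r = radialOp p q u r - radialOp p q v r := by
  have hderiv : deriv (u - v) =ᶠ[𝓝 r] deriv u - deriv v := by
    filter_upwards [hu.eventually (by simp), hv.eventually (by simp)] with y hu' hv'
    exact deriv_sub (hu'.differentiableAt (by norm_num)) (hv'.differentiableAt (by norm_num))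
  rw [radialOp, radialOp, radialOp, hderiv.deriv_eq, hderiv.eq_of_nhds,
    deriv_sub hu.differentiableAt_deriv hv.differentiableAt_deriv]
  simp only [Pi.sub_apply]
  ring

lemma radialOp_congr {p q r : ℝ} {u v : ℝ → ℝ} (h : u =ᶠ[𝓝 r] v) :
    radialOp p q u r = radialOp p q v r := by
  have hderiv : deriv u =ᶠ[𝓝 r] deriv v := h.deriv
  rw [radialOp, radialOp, hderiv.deriv_eq, hderiv.eq_of_nhds, h.eq_of_nhds]

lemma radialOp_comp_div (p q : ℝ) {θ : ℝ} (hθ : θ ≠ 0) (ψ : ℝ → ℝ) (r : ℝ) :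
    radialOp p q (fun s => ψ (s / θ)) r = radialOp p q ψ (r / θ) / θ ^ 2 := by
  have hscale : ∀ f : ℝ → ℝ, deriv (fun s => f (s / θ)) = fun s => θ⁻¹ * deriv f (s / θ) := by
    intro f
    funext s
    simp only [div_eq_inv_mul]
    exact deriv_comp_mul_left θ⁻¹ f s
  rw [radialOp, radialOp, hscale, deriv_const_mul_field', hscale]
  field_simp

lemma hasDerivAt_rpow_mul_deriv {w : ℝ → ℝ} {p x : ℝ} (hx : 0 < x)
    (hw : DifferentiableAt ℝ (deriv w) x) :
    HasDerivAt (fun t => t ^ p * deriv w t)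
      (x ^ p * (deriv (deriv w) x + p / x * deriv w x)) x := by
  refine ((Real.hasDerivAt_rpow_const (p := p) (Or.inl hx.ne')).mul hw.hasDerivAt).congr_deriv ?_
  rw [Real.rpow_sub_one hx.ne']
  field_simp
  ring

lemma le_add_mul_abs_of_deriv_bounds {f : ℝ → ℝ} {a δ C : ℝ}
    (hf : ∀ x ∈ Icc (a - δ) (a + δ), DifferentiableAt ℝ f x)
    (hright : ∀ x ∈ Icc a (a + δ), deriv f x ≤ C)
    (hleft : ∀ x ∈ Icc (a - δ) a, -C ≤ deriv f x) :
    ∀ x ∈ Icc (a - δ) (a + δ), f x ≤ f a + C * |x - a| := by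
  have hcont : ∀ s ⊆ Icc (a - δ) (a + δ), ContinuousOn f s := fun s hs x hx =>
    (hf x (hs hx)).continuousAt.continuousWithinAt
  have hdiff : ∀ s ⊆ Icc (a - δ) (a + δ), DifferentiableOn ℝ f (interior s) := fun s hs x hx =>
    (hf x (hs (interior_subset hx))).differentiableWithinAt
  intro x ⟨hx₁, hx₂⟩
  rcases le_total a x with hax | hxa
  · have hsub : Icc a (a + δ) ⊆ Icc (a - δ) (a + δ) := Icc_subset_Icc (by linarith) le_rfl
    have := (convex_Icc a (a + δ)).image_sub_le_mul_sub_of_deriv_le (hcont _ hsub)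
      (hdiff _ hsub) (fun y hy => hright y (interior_subset hy)) a ⟨le_rfl, by linarith⟩ x
      ⟨hax, hx₂⟩ hax
    rw [abs_of_nonneg (sub_nonneg.2 hax)]
    linarith
  · have hsub : Icc (a - δ) a ⊆ Icc (a - δ) (a + δ) := Icc_subset_Icc le_rfl (by linarith)
    have := (convex_Icc (a - δ) a).mul_sub_le_image_sub_of_le_deriv (hcont _ hsub)
      (hdiff _ hsub) (fun y hy => hleft y (interior_subset hy)) x ⟨hx₁, hxa⟩ a
      ⟨by linarith, le_rfl⟩ hxa
    rw [abs_of_nonpos (sub_nonpos.2 hxa)]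
    linarith

lemma le_two_mul_of_mul_le {c d y B : ℝ} (hc : 0 < c) (hcd : c ≤ 2 * d) (hB : 0 ≤ B)
    (h : d * y ≤ c * B) : y ≤ 2 * B := by
  rcases le_or_gt y 0 with hy | hy
  · linarith
  · nlinarith

lemma deriv_bounds_of_deriv_deriv_add_le {w : ℝ → ℝ} {p a δ L M : ℝ} (hL : 0 ≤ L) (hM : 0 ≤ M)
    (hδ : 0 ≤ δ) (hpos : ∀ x ∈ Icc (a - δ) (a + δ), 0 < x)
    (hrpow : ∀ x ∈ Icc (a - δ) (a + δ), x ^ p ≤ 2 * a ^ p ∧ a ^ p ≤ 2 * x ^ p)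
    (hw : ∀ x ∈ Icc (a - δ) (a + δ), ContDiffAt ℝ 2 w x)
    (hwM : ∀ x ∈ Icc (a - δ) (a + δ), w x ≤ M)
    (hineq : ∀ x ∈ Icc (a - δ) (a + δ), deriv (deriv w) x + p / x * deriv w x ≤ L * w x)
    (hw'a : deriv w a = 0) :
    (∀ x ∈ Icc a (a + δ), deriv w x ≤ 4 * L * M * δ) ∧
      ∀ x ∈ Icc (a - δ) a, -(4 * L * M * δ) ≤ deriv w x := by
  set J := Icc (a - δ) (a + δ)
  have haJ : a ∈ J := ⟨by linarith, by linarith⟩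
  have hapos : 0 < a ^ p := Real.rpow_pos_of_pos (hpos a haJ) p
  set C := a ^ p * (2 * L * M)
  have hC : 0 ≤ C := by positivity
  -- the integrating factor `x ^ p` turns the inequality into a bound on `(x ^ p * w')'`
  set g := fun t => t ^ p * deriv w t
  have hg : ∀ x ∈ J, HasDerivAt g (x ^ p * (deriv (deriv w) x + p / x * deriv w x)) x :=
    fun x hx => hasDerivAt_rpow_mul_deriv (hpos x hx) (hw x hx).differentiableAt_deriv
  have hg' : ∀ x ∈ J, deriv g x ≤ C := by
    intro x hx
    rw [(hg x hx).deriv]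
    calc x ^ p * (deriv (deriv w) x + p / x * deriv w x) ≤ x ^ p * (L * M) :=
          mul_le_mul_of_nonneg_left ((hineq x hx).trans (mul_le_mul_of_nonneg_left (hwM x hx) hL))
            (Real.rpow_pos_of_pos (hpos x hx) p).le
      _ ≤ 2 * a ^ p * (L * M) := mul_le_mul_of_nonneg_right (hrpow x hx).1 (mul_nonneg hL hM)
      _ = C := by ring
  have hgJ := (convex_Icc (a - δ) (a + δ)).image_sub_le_mul_sub_of_deriv_le
    (fun x hx => (hg x hx).continuousAt.continuousWithinAt)
    (fun x hx => (hg x (interior_subset hx)).differentiableAt.differentiableWithinAt)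
    (fun x hx => hg' x (interior_subset hx))
  have hga : g a = 0 := by simp [g, hw'a]
  constructor
  · intro x ⟨hax, hxa⟩
    have hxJ : x ∈ J := ⟨by linarith, hxa⟩
    have hgx : x ^ p * deriv w x ≤ a ^ p * (2 * L * M * δ) := by
      nlinarith [hgJ a haJ x hxJ hax, mul_le_mul_of_nonneg_left (by linarith : x - a ≤ δ) hC]
    linarith [le_two_mul_of_mul_le hapos (hrpow x hxJ).2 (by positivity) hgx]
  · intro x ⟨hxa, hax⟩
    have hxJ : x ∈ J := ⟨hxa, by linarith⟩
    have hgx : x ^ p * -deriv w x ≤ a ^ p * (2 * L * M * δ) := by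
      nlinarith [hgJ x hxJ a haJ hax, mul_le_mul_of_nonneg_left (by linarith : a - x ≤ δ) hC]
    linarith [le_two_mul_of_mul_le hapos (hrpow x hxJ).2 (by positivity) hgx]

theorem eqOn_zero_of_deriv_deriv_add_le {w : ℝ → ℝ} {p a δ L : ℝ} (hδ : 0 ≤ δ) (hL : 0 ≤ L)
    (hδL : 4 * L * δ ^ 2 < 1)
    (hpos : ∀ x ∈ Icc (a - δ) (a + δ), 0 < x)
    (hrpow : ∀ x ∈ Icc (a - δ) (a + δ), x ^ p ≤ 2 * a ^ p ∧ a ^ p ≤ 2 * x ^ p)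
    (hw : ∀ x ∈ Icc (a - δ) (a + δ), ContDiffAt ℝ 2 w x)
    (hnonneg : ∀ x ∈ Icc (a - δ) (a + δ), 0 ≤ w x)
    (hineq : ∀ x ∈ Icc (a - δ) (a + δ), deriv (deriv w) x + p / x * deriv w x ≤ L * w x)
    (hwa : w a = 0) (hw'a : deriv w a = 0) : EqOn w 0 (Icc (a - δ) (a + δ)) := by
  have hdiff : ∀ x ∈ Icc (a - δ) (a + δ), DifferentiableAt ℝ w x := fun x hx =>
    (hw x hx).differentiableAt (by norm_num)
  obtain ⟨xm, hxm, hmax⟩ := isCompact_Icc.exists_isMaxOn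
    ⟨a, by constructor <;> linarith⟩ fun x hx => (hdiff x hx).continuousAt.continuousWithinAt
  have hM : 0 ≤ w xm := hnonneg xm hxm
  obtain ⟨hright, hleft⟩ := deriv_bounds_of_deriv_deriv_add_le hL hM hδ hpos hrpow hw
    (fun x hx => hmax hx) hineq hw'a
  have hxm' : |xm - a| ≤ δ := abs_sub_le_iff.2 ⟨by linarith [hxm.2], by linarith [hxm.1]⟩
  have hbound : w xm ≤ 4 * L * δ ^ 2 * w xm :=
    calc w xm ≤ w a + 4 * L * w xm * δ * |xm - a| :=
          le_add_mul_abs_of_deriv_bounds hdiff hright hleft xm hxm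
      _ ≤ 4 * L * δ ^ 2 * w xm := by
          rw [hwa]; nlinarith [mul_nonneg (mul_nonneg hL hM) hδ]
  have hM0 : w xm = 0 := by nlinarith
  exact fun x hx => le_antisymm ((hmax hx).trans hM0.le) (hnonneg x hx)

theorem eventually_eq_zero_of_radialOp_le {p q K a : ℝ} {w : ℝ → ℝ} (ha : 0 < a)
    (hw : ∀ᶠ x in 𝓝 a, ContDiffAt ℝ 2 w x ∧ 0 ≤ w x ∧ radialOp p q w x ≤ K * w x)
    (hwa : w a = 0) : ∀ᶠ x in 𝓝 a, w x = 0 := by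
  set L := |K| + 4 * |q| / a ^ 2
  have hw'a : deriv w a = 0 := IsLocalMin.deriv_eq_zero (hw.mono fun x hx => hwa ▸ hx.2.1)
  have hapos : 0 < a ^ p := Real.rpow_pos_of_pos ha p
  have hrpow : Tendsto (fun x => x ^ p) (𝓝 a) (𝓝 (a ^ p)) :=
    Real.continuousAt_rpow_const a p (Or.inl ha.ne')
  have hloc : ∀ᶠ x in 𝓝 a, (0 < x ∧ x ^ p ≤ 2 * a ^ p ∧ a ^ p ≤ 2 * x ^ p) ∧
      ContDiffAt ℝ 2 w x ∧ 0 ≤ w x ∧ deriv (deriv w) x + p / x * deriv w x ≤ L * w x := by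
    filter_upwards [hw, eventually_gt_nhds (half_lt_self ha),
      hrpow.eventually_lt_const (by linarith : a ^ p < 2 * a ^ p),
      hrpow.eventually_const_lt (by linarith : a ^ p / 2 < a ^ p)] with x ⟨hC2, hw0, hop⟩ hx hx₁ hx₂
    have hx0 : 0 < x := by linarith
    refine ⟨⟨hx0, hx₁.le, by linarith⟩, hC2, hw0, ?_⟩
    have hq : q / x ^ 2 ≤ 4 * |q| / a ^ 2 := by
      calc q / x ^ 2 ≤ |q| / x ^ 2 := by gcongr; exact le_abs_self q
        _ ≤ |q| / (a / 2) ^ 2 := by gcongr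
        _ = 4 * |q| / a ^ 2 := by ring
    have hK : K * w x ≤ |K| * w x := mul_le_mul_of_nonneg_right (le_abs_self K) hw0
    have := mul_le_mul_of_nonneg_right hq hw0
    rw [radialOp] at hop
    linarith
  obtain ⟨ε, hε, hball⟩ := Metric.eventually_nhds_iff.1 hloc
  have hsmall : Tendsto (fun δ : ℝ => 4 * L * δ ^ 2) (𝓝 0) (𝓝 0) := by
    simpa using ((continuous_pow 2).const_mul (4 * L)).tendsto 0
  obtain ⟨δ, ⟨hδε, hδL⟩, hδ⟩ : ∃ δ, (δ < ε ∧ 4 * L * δ ^ 2 < 1) ∧ 0 < δ :=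
    (((eventually_lt_nhds hε).and (hsmall.eventually_lt_const one_pos)).filter_mono
      nhdsWithin_le_nhds |>.and self_mem_nhdsWithin).exists (f := 𝓝[>] 0)
  have hJ : ∀ x ∈ Icc (a - δ) (a + δ), dist x a < ε := fun x hx => by
    rw [Real.dist_eq, abs_lt]; constructor <;> linarith [hx.1, hx.2]
  have hzero := eqOn_zero_of_deriv_deriv_add_le (le_of_lt hδ) (by positivity) hδL
    (fun x hx => (hball (hJ x hx)).1.1) (fun x hx => (hball (hJ x hx)).1.2)
    (fun x hx => (hball (hJ x hx)).2.1) (fun x hx => (hball (hJ x hx)).2.2.1)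
    (fun x hx => (hball (hJ x hx)).2.2.2) hwa hw'a
  filter_upwards [Icc_mem_nhds (by linarith : a - δ < a) (by linarith : a < a + δ)] with x hx
  exact hzero hx

lemma eventually_nhdsNE_notMem_of_finite {S : Set ℝ} {x ε : ℝ} (hε : 0 < ε)
    (hS : (S ∩ Ioo (x - ε) (x + ε)).Finite) : ∀ᶠ y in 𝓝[≠] x, y ∉ S := by
  have hfar : ∀ᶠ y in 𝓝 x, y ∉ (S ∩ Ioo (x - ε) (x + ε)) \ {x} :=
    (hS.sdiff).isClosed.compl_mem_nhds fun h => h.2 rfl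
  filter_upwards [nhdsWithin_le_nhds hfar, nhdsWithin_le_nhds (Ioo_mem_nhds
    (by linarith : x - ε < x) (by linarith : x < x + ε)), self_mem_nhdsWithin]
    with y hy hyI hyx hyS using hy ⟨⟨hyS, hyI⟩, hyx⟩

lemma LocLipOn.continuousOn {I : Set ℝ} {ψ : ℝ → ℝ} (h : LocLipOn I ψ) : ContinuousOn ψ I :=
  fun x hx => by
    obtain ⟨K, t, ht, hψ⟩ := h x hx
    exact (hψ.continuousOn x (mem_of_mem_nhdsWithin hx ht)).mono_of_mem_nhdsWithin ht

lemma IsLocalMin.le_of_hasDerivWithinAt_Iio_Ioi {f : ℝ → ℝ} {a dl dr : ℝ} (hmin : IsLocalMin f a)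
    (hl : HasDerivWithinAt f dl (Iio a) a) (hr : HasDerivWithinAt f dr (Ioi a) a) : dl ≤ dr := by
  rw [hasDerivWithinAt_iff_tendsto_slope, sdiff_singleton_eq_self self_notMem_Iio] at hl
  rw [hasDerivWithinAt_iff_tendsto_slope, sdiff_singleton_eq_self self_notMem_Ioi] at hr
  have hdl : dl ≤ 0 := le_of_tendsto hl <| by
    filter_upwards [hmin.filter_mono nhdsWithin_le_nhds, self_mem_nhdsWithin] with x hx hxa
    rw [slope_def_field]
    exact div_nonpos_of_nonneg_of_nonpos (sub_nonneg.2 hx) (sub_nonpos.2 (le_of_lt hxa))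
  have hdr : 0 ≤ dr := ge_of_tendsto hr <| by
    filter_upwards [hmin.filter_mono nhdsWithin_le_nhds, self_mem_nhdsWithin] with x hx hxa
    rw [slope_def_field]
    exact div_nonneg (sub_nonneg.2 hx) (sub_nonneg.2 (le_of_lt hxa))
  linarith

section Solutions

variable {p q : ℝ} {F : ℝ → ℝ} {I : Set ℝ} {ψ : ℝ → ℝ}

lemma IsSuperSolutionOn.eventually_regular (h : IsSuperSolutionOn p q F I ψ) {x : ℝ}
    (hx : I ∈ 𝓝 x) : ∀ᶠ y in 𝓝[≠] x, ContDiffAt ℝ 2 ψ y ∧ radialOp p q ψ y ≤ F (ψ y) := by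
  obtain ⟨-, S, hfin, hreg, -⟩ := h
  obtain ⟨ε, hε, hS⟩ := hfin x (mem_of_mem_nhds hx)
  filter_upwards [eventually_nhdsNE_notMem_of_finite hε hS, nhdsWithin_le_nhds hx]
    with y hyS hyI using hreg y ⟨hyI, hyS⟩

lemma IsSubSolutionOn.eventually_regular (h : IsSubSolutionOn p q F I ψ) {x : ℝ}
    (hx : I ∈ 𝓝 x) : ∀ᶠ y in 𝓝[≠] x, ContDiffAt ℝ 2 ψ y ∧ F (ψ y) ≤ radialOp p q ψ y := by
  obtain ⟨-, S, hfin, hreg, -⟩ := h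
  obtain ⟨ε, hε, hS⟩ := hfin x (mem_of_mem_nhds hx)
  filter_upwards [eventually_nhdsNE_notMem_of_finite hε hS, nhdsWithin_le_nhds hx]
    with y hyS hyI using hreg y ⟨hyI, hyS⟩

lemma IsSuperSolutionOn.exists_hasDerivWithinAt_Iio_Ioi (h : IsSuperSolutionOn p q F I ψ)
    {x : ℝ} (hx : x ∈ I) :
    ∃ dl dr, HasDerivWithinAt ψ dl (Iio x) x ∧ HasDerivWithinAt ψ dr (Ioi x) x ∧ dr ≤ dl ∧
      (dl ≤ dr → ContDiffAt ℝ 2 ψ x ∧ radialOp p q ψ x ≤ F (ψ x)) := by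
  obtain ⟨-, S, -, hreg, hjump⟩ := h
  by_cases hxS : x ∈ S
  · obtain ⟨dl, dr, hdl, hdr, hlt⟩ := hjump x ⟨hx, hxS⟩
    exact ⟨dl, dr, hdl, hdr, hlt.le, fun hle => absurd hle (not_le.2 hlt)⟩
  · have hx' := hreg x ⟨hx, hxS⟩
    have hd := (hx'.1.differentiableAt (by norm_num)).hasDerivAt
    exact ⟨_, _, hd.hasDerivWithinAt, hd.hasDerivWithinAt, le_rfl, fun _ => hx'⟩

lemma IsSubSolutionOn.exists_hasDerivWithinAt_Iio_Ioi (h : IsSubSolutionOn p q F I ψ)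
    {x : ℝ} (hx : x ∈ I) :
    ∃ dl dr, HasDerivWithinAt ψ dl (Iio x) x ∧ HasDerivWithinAt ψ dr (Ioi x) x ∧ dl ≤ dr ∧
      (dr ≤ dl → ContDiffAt ℝ 2 ψ x ∧ F (ψ x) ≤ radialOp p q ψ x) := by
  obtain ⟨-, S, -, hreg, hjump⟩ := h
  by_cases hxS : x ∈ S
  · obtain ⟨dl, dr, hdl, hdr, hlt⟩ := hjump x ⟨hx, hxS⟩
    exact ⟨dl, dr, hdl, hdr, hlt.le, fun hle => absurd hle (not_le.2 hlt)⟩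
  · have hx' := hreg x ⟨hx, hxS⟩
    have hd := (hx'.1.differentiableAt (by norm_num)).hasDerivAt
    exact ⟨_, _, hd.hasDerivWithinAt, hd.hasDerivWithinAt, le_rfl, fun _ => hx'⟩

lemma IsPreconnected.eqOn_of_eventuallyEq {X Y : Type*} [TopologicalSpace X] [TopologicalSpace Y]
    [T2Space Y] {s : Set X} {f g : X → Y} (hs : IsPreconnected s) (hso : IsOpen s)
    (hf : ContinuousOn f s) (hg : ContinuousOn g s) (hloc : ∀ x ∈ s, f x = g x → f =ᶠ[𝓝 x] g)
    {x₀ : X} (hx₀ : x₀ ∈ s) (h₀ : f x₀ = g x₀) : EqOn f g s := by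
  set u := {x | f =ᶠ[𝓝 x] g}
  have hsub : s ⊆ u := by
    refine hs.subset_of_closure_inter_subset isOpen_setOfPred_eventually_nhds
      ⟨x₀, hx₀, hloc x₀ hx₀ h₀⟩ ?_
    rintro x ⟨hxc, hxs⟩
    refine hloc x hxs ?_
    have : (𝓝[u] x).NeBot := mem_closure_iff_nhdsWithin_neBot.1 hxc
    have hfx : Tendsto f (𝓝[u] x) (𝓝 (f x)) :=
      (hf.continuousAt (hso.mem_nhds hxs)).mono_left nhdsWithin_le_nhds
    have hgx : Tendsto f (𝓝[u] x) (𝓝 (g x)) :=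
      ((hg.continuousAt (hso.mem_nhds hxs)).mono_left nhdsWithin_le_nhds).congr'
        (eventually_nhdsWithin_of_forall fun y hy => hy.eq_of_nhds.symm)
    exact tendsto_nhds_unique hfx hgx
  exact fun x hx => (hsub hx).eq_of_nhds

theorem IsSuperSolutionOn.eqOn_of_touching {K : NNReal} {s : Set ℝ} {u v : ℝ → ℝ}
    (hv : IsSuperSolutionOn p q F (Ioi 0) v) (hu : IsSubSolutionOn p q F (Ioi 0) u)
    (hF : LipschitzOnWith K F s) (hvs : ∀ r ∈ Ioi (0 : ℝ), v r ∈ s)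
    (hus : ∀ r ∈ Ioi (0 : ℝ), u r ∈ s) (hle : ∀ r : ℝ, 0 < r → u r ≤ v r) {r₀ : ℝ}
    (hr₀ : 0 < r₀) (heq : v r₀ = u r₀) : EqOn v u (Ioi 0) := by
  refine isPreconnected_Ioi.eqOn_of_eventuallyEq isOpen_Ioi hv.1.continuousOn hu.1.continuousOn
    (fun a ha hva => ?_) hr₀ heq
  have ha' : Ioi (0 : ℝ) ∈ 𝓝 a := Ioi_mem_nhds ha
  have hmin : IsLocalMin (v - u) a := by
    filter_upwards [ha'] with x hx
    simpa [hva] using hle x hx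
  -- a touching point is neither a kink of `v` nor of `u`
  obtain ⟨dl, dr, hdl, hdr, hd, hvreg⟩ := hv.exists_hasDerivWithinAt_Iio_Ioi ha
  obtain ⟨el, er, hel, her, he, hureg⟩ := hu.exists_hasDerivWithinAt_Iio_Ioi ha
  have hkink := hmin.le_of_hasDerivWithinAt_Iio_Ioi (hdl.sub hel) (hdr.sub her)
  have hreg : ∀ᶠ x in 𝓝 a, (ContDiffAt ℝ 2 v x ∧ radialOp p q v x ≤ F (v x)) ∧
      (ContDiffAt ℝ 2 u x ∧ F (u x) ≤ radialOp p q u x) := by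
    filter_upwards [eventually_nhdsWithin_iff.1 ((hv.eventually_regular ha').and
      (hu.eventually_regular ha'))] with x hx
    rcases eq_or_ne x a with rfl | hxa
    · exact ⟨hvreg (by linarith), hureg (by linarith)⟩
    · exact hx hxa
  have hzero : ∀ᶠ x in 𝓝 a, (v - u) x = 0 := by
    refine eventually_eq_zero_of_radialOp_le (p := p) (q := q) (K := K) ha ?_ (sub_eq_zero.2 hva)
    filter_upwards [hreg, ha'] with x ⟨⟨hvC, hvF⟩, ⟨huC, huF⟩⟩ hx
    have hlip := hF.dist_le_mul _ (hvs x hx) _ (hus x hx)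
    rw [Real.dist_eq, Real.dist_eq, abs_of_nonneg (sub_nonneg.2 (hle x hx))] at hlip
    refine ⟨hvC.sub huC, sub_nonneg.2 (hle x hx), ?_⟩
    rw [radialOp_sub hvC huC, Pi.sub_apply]
    linarith [le_abs_self (F (v x) - F (u x))]
  filter_upwards [hzero] with x hx using sub_eq_zero.1 hx

lemma LocLipOn.comp_div {θ : ℝ} (h : LocLipOn (Ioi 0) ψ) (hθ : 0 < θ) :
    LocLipOn (Ioi 0) (fun r => ψ (r / θ)) := by
  intro x hx
  obtain ⟨K, t, ht, hψ⟩ := h (x / θ) (div_pos hx hθ)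
  rw [isOpen_Ioi.nhdsWithin_eq (div_pos hx hθ)] at ht
  have hdiv : (fun r : ℝ => r / θ) = (θ⁻¹ • ·) := by
    funext r
    rw [smul_eq_mul, div_eq_inv_mul]
  refine ⟨K * ‖θ⁻¹‖₊, (· / θ) ⁻¹' t, ?_, ?_⟩
  · rw [isOpen_Ioi.nhdsWithin_eq hx]
    exact (continuous_id.div_const θ).continuousAt.preimage_mem_nhds ht
  · have := hψ.comp (lipschitzWith_smul θ⁻¹).lipschitzOnWith (mapsTo_preimage _ t)
    rwa [← hdiv] at this

theorem IsSuperSolutionOn.comp_div {θ : ℝ} (h : IsSuperSolutionOn p q F (Ioi 0) ψ)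
    (hFψ : ∀ r ∈ Ioi (0 : ℝ), F (ψ r) ≤ 0) (hθ0 : 0 < θ) (hθ1 : θ ≤ 1) :
    IsSuperSolutionOn p q F (Ioi 0) (fun r => ψ (r / θ)) := by
  obtain ⟨hlip, S, hfin, hreg, hjump⟩ := h
  refine ⟨hlip.comp_div hθ0, (· / θ) ⁻¹' S, ?_, ?_, ?_⟩
  · intro x hx
    obtain ⟨ε, hε, hS⟩ := hfin (x / θ) (div_pos hx hθ0)
    refine ⟨ε * θ, by positivity, (hS.preimage fun a _ b _ h => (div_left_inj' hθ0.ne').1 h).subset ?_⟩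
    rintro y ⟨hyS, hy₁, hy₂⟩
    have hlo : x / θ - ε = (x - ε * θ) / θ := by field_simp
    have hhi : x / θ + ε = (x + ε * θ) / θ := by field_simp
    exact ⟨hyS, by rw [hlo]; exact div_lt_div_of_pos_right hy₁ hθ0,
      by rw [hhi]; exact div_lt_div_of_pos_right hy₂ hθ0⟩
  · rintro x ⟨hx, hxS⟩
    obtain ⟨hC, hineq : radialOp p q ψ (x / θ) ≤ F (ψ (x / θ))⟩ := hreg (x / θ) ⟨div_pos hx hθ0, hxS⟩
    refine ⟨hC.comp x (contDiffAt_id.div_const θ), ?_⟩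
    change radialOp p q (fun r => ψ (r / θ)) x ≤ F (ψ (x / θ))
    have hF := hFψ (x / θ) (div_pos hx hθ0)
    have hθ2 : θ ^ 2 ≤ 1 := pow_le_one₀ hθ0.le hθ1
    rw [radialOp_comp_div p q hθ0.ne', div_le_iff₀ (by positivity)]
    nlinarith [mul_le_mul_of_nonpos_left hθ2 hF]
  · rintro x ⟨hx, hxS⟩
    obtain ⟨dl, dr, hdl, hdr, hlt⟩ := hjump (x / θ) ⟨div_pos hx hθ0, hxS⟩
    have hdiv : HasDerivAt (fun r : ℝ => r / θ) (1 / θ) x := (hasDerivAt_id' x).div_const θ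
    have hIio : MapsTo (fun r : ℝ => r / θ) (Iio x) (Iio (x / θ)) := fun y hy =>
      div_lt_div_of_pos_right hy hθ0
    have hIoi : MapsTo (fun r : ℝ => r / θ) (Ioi x) (Ioi (x / θ)) := fun y hy =>
      div_lt_div_of_pos_right hy hθ0
    exact ⟨dl * (1 / θ), dr * (1 / θ), hdl.comp x hdiv.hasDerivWithinAt hIio,
      hdr.comp x hdiv.hasDerivWithinAt hIoi, mul_lt_mul_of_pos_right hlt (by positivity)⟩

theorem IsSuperSolutionOn.one_le_of_eqOn_comp_div {u : ℝ → ℝ} {θ : ℝ}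
    (hψ : IsSuperSolutionOn p q F (Ioi 0) ψ) (hu : IsSubSolutionOn p q F (Ioi 0) u) (hθ : 0 < θ)
    (heq : EqOn (fun r => ψ (r / θ)) u (Ioi 0)) (hneg : ∀ᶠ x in 𝓝[>] 0, F (ψ x) < 0) :
    1 ≤ θ := by
  obtain ⟨ε, hε, hεneg⟩ := mem_nhdsGT_iff_exists_Ioo_subset.1 hneg
  have hε : (0 : ℝ) < ε := hε
  set r₁ := θ * ε / 2 with hr₁_def
  have hr₁ : r₁ ∈ Ioo 0 (θ * ε) := ⟨by positivity, by linarith [mul_pos hθ hε]⟩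
  have hdiv : Tendsto (· / θ) (𝓝[≠] r₁) (𝓝[≠] (r₁ / θ)) :=
    tendsto_nhdsWithin_of_tendsto_nhds_of_eventually_within _
      (((continuous_id.div_const θ).tendsto r₁).mono_left nhdsWithin_le_nhds)
      (eventually_nhdsWithin_of_forall fun r hr => by simpa [div_left_inj' hθ.ne'] using hr)
  have hnear : ∀ᶠ r in 𝓝[≠] r₁, r ∈ Ioo 0 (θ * ε) :=
    nhdsWithin_le_nhds (isOpen_Ioo.mem_nhds hr₁)
  obtain ⟨r, hr, ⟨-, huF⟩, ⟨-, hψF⟩⟩ := (hnear.and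
    ((hu.eventually_regular (Ioi_mem_nhds hr₁.1)).and
      (hdiv.eventually (hψ.eventually_regular (Ioi_mem_nhds (div_pos hr₁.1 hθ)))))).exists
  have hr0 : 0 < r := hr.1
  have hFneg : F (ψ (r / θ)) < 0 :=
    hεneg ⟨div_pos hr0 hθ, (div_lt_iff₀ hθ).2 (by linarith [hr.2])⟩
  have hop : radialOp p q u r = radialOp p q ψ (r / θ) / θ ^ 2 := by
    rw [← radialOp_comp_div p q hθ.ne']
    exact radialOp_congr (heq.eventuallyEq_of_mem (Ioi_mem_nhds hr0)).symm
  rw [hop, ← heq hr0, le_div_iff₀ (by positivity)] at huF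
  by_contra! hθ1
  have hθ2 : θ ^ 2 < 1 := by nlinarith
  nlinarith [mul_lt_mul_of_neg_left hθ2 hFneg]

end Solutions

lemma gammaPlus_pos (p : ℝ) {q : ℝ} (hq : 0 < q) : 0 < gammaPlus p q := by
  have h : |p - 1| < Real.sqrt ((p - 1) ^ 2 + 4 * q) := by
    rw [← Real.sqrt_sq_eq_abs]
    exact Real.sqrt_lt_sqrt (sq_nonneg _) (by linarith)
  rw [gammaPlus]
  linarith [le_abs_self (p - 1)]

lemma eventuallyEq_rpow_mul_div_rpow (u : ℝ → ℝ) (α γ : ℝ) :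
    u =ᶠ[𝓝[>] 0] fun r => r ^ γ * ((u r - α * r ^ γ) / r ^ γ + α) :=
  eventually_nhdsWithin_of_forall fun r (hr : 0 < r) => by
    field_simp [(Real.rpow_pos_of_pos hr γ).ne']
    ring

lemma AsympZero.eventually_pos {u : ℝ → ℝ} {α γ : ℝ} (h : AsympZero u α γ) (hα : 0 < α) :
    ∀ᶠ r in 𝓝[>] 0, 0 < u r := by
  filter_upwards [eventuallyEq_rpow_mul_div_rpow u α γ, (h.add_const α).eventually_const_lt (by simpa using hα),
    self_mem_nhdsWithin] with r hr hpos (hr0 : 0 < r)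
  rw [hr]
  exact mul_pos (Real.rpow_pos_of_pos hr0 γ) hpos

lemma AsympZero.tendsto_zero {u : ℝ → ℝ} {α γ : ℝ} (h : AsympZero u α γ) (hγ : 0 < γ) :
    Tendsto u (𝓝[>] 0) (𝓝 0) := by
  have hrpow : Tendsto (fun r : ℝ => r ^ γ) (𝓝[>] 0) (𝓝 0) := by
    simpa [Real.zero_rpow hγ.ne'] using
      (Real.continuousAt_rpow_const 0 γ (Or.inr hγ.le)).tendsto.mono_left nhdsWithin_le_nhds
  simpa using (hrpow.mul (h.add_const α)).congr' (eventuallyEq_rpow_mul_div_rpow u α γ).symm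

theorem stmt3_general (p q sp : ℝ) (hq : 0 < q) (hsp : 0 < sp)
    (F : ℝ → ℝ) (hF : CondF F sp)
    (ub lb : ℝ → ℝ) (αb : ℝ)
    (hsuper : IsSuperSolutionOn p q F (Set.Ioi 0) ub)
    (hsub : IsSubSolutionOn p q F (Set.Ioi 0) lb)
    (hubnd : ∀ r ∈ Set.Ioi (0:ℝ), 0 ≤ ub r ∧ ub r ≤ sp)
    (hlbnd : ∀ r ∈ Set.Ioi (0:ℝ), 0 ≤ lb r ∧ lb r ≤ sp)
    (hαb : 0 < αb)
    (h0ub : AsympZero ub αb (gammaPlus p q))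
    (θ : ℝ) (hθ0 : 0 < θ) (hθ1 : θ ≤ 1)
    (hge : ∀ r : ℝ, 0 < r → lb r ≤ ub (r / θ))
    (r₀ : ℝ) (hr₀ : 0 < r₀) (heq : ub (r₀ / θ) = lb r₀) :
    θ = 1 ∧ ∀ r : ℝ, 0 < r → ub r = lb r := by
  obtain ⟨K, hK⟩ : ∃ K, LipschitzOnWith K F (Icc 0 sp) :=
    hF.1.locallyLipschitz.locallyLipschitzOn.exists_lipschitzOnWith_of_compact isCompact_Icc
  have hv := hsuper.comp_div (fun r hr => hF.nonpos_of_mem_Icc (hubnd r hr)) hθ0 hθ1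
  have hvlb : EqOn (fun r => ub (r / θ)) lb (Ioi 0) :=
    hv.eqOn_of_touching hsub hK (fun r hr => hubnd _ (div_pos hr hθ0)) hlbnd hge hr₀ heq
  have hneg : ∀ᶠ r in 𝓝[>] 0, F (ub r) < 0 := by
    filter_upwards [h0ub.eventually_pos hαb,
      (h0ub.tendsto_zero (gammaPlus_pos p hq)).eventually_lt_const hsp] with r h0 h1
    exact hF.2.2.2.1 _ ⟨h0, h1⟩
  have hθ : θ = 1 := le_antisymm hθ1 (hsuper.one_le_of_eqOn_comp_div hsub hθ0 hvlb hneg)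
  subst hθ
  exact ⟨rfl, fun r hr => by simpa using hvlb hr⟩

/-- if for some `θ ∈ (0,1]` one has `ū(·/θ) ≥ u̲` on `(0,∞)` with equality
somewhere, then `θ = 1` and `ū ≡ u̲` on `(0,∞)`. -/
theorem stmt3 (p q sp : ℝ) (hp : 0 ≤ p) (hq : 0 < q) (hsp : 0 < sp)
    (F : ℝ → ℝ) (hF : CondF F sp)
    (ub lb : ℝ → ℝ) (αb αl βb βl : ℝ)
    (hsuper : IsSuperSolutionOn p q F (Set.Ioi 0) ub)
    (hsub : IsSubSolutionOn p q F (Set.Ioi 0) lb)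
    (hubnd : ∀ r ∈ Set.Ioi (0:ℝ), 0 ≤ ub r ∧ ub r ≤ sp)
    (hlbnd : ∀ r ∈ Set.Ioi (0:ℝ), 0 ≤ lb r ∧ lb r ≤ sp)
    (hαb : 0 < αb)
    (h0ub : AsympZero ub αb (gammaPlus p q))
    (h0lb : AsympZero lb αl (gammaPlus p q))
    (hβl : 0 < βl)
    (hiub : AsympInfty ub sp βb)
    (hilb : AsympInfty lb sp βl)
    (θ : ℝ) (hθ0 : 0 < θ) (hθ1 : θ ≤ 1)
    (hge : ∀ r : ℝ, 0 < r → lb r ≤ ub (r / θ))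
    (r₀ : ℝ) (hr₀ : 0 < r₀) (heq : ub (r₀ / θ) = lb r₀) :
    θ = 1 ∧ ∀ r : ℝ, 0 < r → ub r = lb r :=
  stmt3_general p q sp hq hsp F hF ub lb αb hsuper hsub hubnd hlbnd hαb h0ub θ hθ0 hθ1 hge r₀ hr₀
    heq
end

section
/- Singular Hopf lemma: Let a > 1, let 0 < R ≤ ∞, and let c : [0,R) → ℝ be continuous. Suppose w is continuous on [0,R), C² on (0,R), satisfies w(r) ≥ 0 for all r ∈ [0,R) and w''(r) + (a/r)·w'(r) + c(r)·w(r) ≤ 0 for all r ∈ (0,R). If w(0) = 0, then w ≡ 0 on [0,R). -/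
/-!
Multiplying the inequality by `r ^ a` gives `(r ^ a w')' ≤ -r ^ a c w`. On `[0, ρ]`, with
`w ≤ W` and `-c ≤ M`, the function `r ^ a w' - K r ^ (a + 1)`, `K = M W / (a + 1)`, is thus
nonincreasing. It cannot be positive anywhere: otherwise `w' ≥ β r ^ (-a)` near `0`, and since
`a > 1` this drives `w` to `-∞` at `0`, contradicting `w ≥ 0`. Hence `w' ≤ K r`, so if `w`
vanishes on `[0, r₁]` then `W ≤ K ρ (ρ - r₁) = W · M ρ (ρ - r₁) / (a + 1)`, which forces
`W = 0` once `ρ - r₁` is small. Steps of a fixed length then exhaust `[0, ρ]`.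
-/

open Set Filter Topology
open scoped ENNReal

theorem exists_rpow_mul_deriv_lt {a t β B : ℝ} {w : ℝ → ℝ} (ha : 1 < a) (ht : 0 < t)
    (hβ : 0 < β) (hwd : ∀ r ∈ Ioc 0 t, DifferentiableAt ℝ w r) (hwB : ∀ r ∈ Ioc 0 t, B ≤ w r) :
    ∃ r ∈ Ioc 0 t, r ^ a * deriv w r < β := by
  by_contra! hge
  set G : ℝ → ℝ := fun r => w r + β / (a - 1) * r ^ (1 - a)
  have hG : ∀ r ∈ Ioc 0 t, HasDerivAt G (deriv w r - β * r ^ (-a)) r := by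
    intro r hr
    have hpow := (Real.hasDerivAt_rpow_const (p := 1 - a) (Or.inl hr.1.ne')).const_mul
      (β / (a - 1))
    refine ((hwd r hr).hasDerivAt.add hpow).congr_deriv ?_
    rw [show 1 - a - 1 = -a by ring]
    field_simp [show a - 1 ≠ 0 by linarith]
    ring
  have hmono : MonotoneOn G (Ioc 0 t) := by
    refine monotoneOn_of_deriv_nonneg (convex_Ioc 0 t)
      (fun r hr => (hG r hr).continuousAt.continuousWithinAt) ?_ ?_ <;> rw [interior_Ioc]
    · exact fun r hr => (hG r (Ioo_subset_Ioc_self hr)).differentiableAt.differentiableWithinAt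
    · intro r hr
      have hr' := Ioo_subset_Ioc_self hr
      rw [(hG r hr').deriv, sub_nonneg, Real.rpow_neg hr.1.le, ← div_eq_mul_inv,
        div_le_iff₀ (Real.rpow_pos_of_pos hr.1 a)]
      linarith [hge r hr']
  have hbound : ∀ r ∈ Ioc 0 t, β / (a - 1) * r ^ (1 - a) ≤ G t - B := fun r hr => by
    have hGr := hmono hr (right_mem_Ioc.2 ht) hr.2
    have hBr := hwB r hr
    simp only [G] at hGr ⊢
    linarith
  have hlim : Tendsto (fun r : ℝ => β / (a - 1) * r ^ (1 - a)) (𝓝[>] 0) atTop :=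
    (tendsto_rpow_neg_nhdsGT_zero (by linarith)).const_mul_atTop (div_pos hβ (by linarith))
  obtain ⟨r, hr_big, hr⟩ :=
    ((hlim.eventually_gt_atTop (G t - B)).and (Ioc_mem_nhdsGT ht)).exists
  exact (hbound r hr).not_gt hr_big

theorem deriv_le_mul_of_deriv_deriv_add_le {a K t : ℝ} {w : ℝ → ℝ} (ha : 1 < a)
    (hK : 0 ≤ K) (hwd : ∀ r ∈ Ioc 0 t, DifferentiableAt ℝ w r)
    (hwd2 : ∀ r ∈ Ioc 0 t, DifferentiableAt ℝ (deriv w) r) (hw : ∀ r ∈ Ioc 0 t, 0 ≤ w r)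
    (hineq : ∀ r ∈ Ioc 0 t, deriv (deriv w) r + a / r * deriv w r ≤ (a + 1) * K) :
    ∀ r ∈ Ioc 0 t, deriv w r ≤ K * r := by
  set g : ℝ → ℝ := fun r => r ^ a * deriv w r - K * r ^ (a + 1)
  have hg : ∀ r ∈ Ioc 0 t, HasDerivAt g
      (r ^ a * (deriv (deriv w) r + a / r * deriv w r - (a + 1) * K)) r := by
    intro r hr
    have hr0 := hr.1.ne'
    refine (((Real.hasDerivAt_rpow_const (Or.inl hr0)).mul (hwd2 r hr).hasDerivAt).sub
      ((Real.hasDerivAt_rpow_const (Or.inl hr0)).const_mul K)).congr_deriv ?_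
    rw [add_sub_cancel_right, Real.rpow_sub_one hr0]
    field_simp
    ring
  have hanti : AntitoneOn g (Ioc 0 t) := by
    refine antitoneOn_of_deriv_nonpos (convex_Ioc 0 t)
      (fun r hr => (hg r hr).continuousAt.continuousWithinAt) ?_ ?_ <;> rw [interior_Ioc]
    · exact fun r hr => (hg r (Ioo_subset_Ioc_self hr)).differentiableAt.differentiableWithinAt
    · intro r hr
      have hr' := Ioo_subset_Ioc_self hr
      rw [(hg r hr').deriv]
      exact mul_nonpos_of_nonneg_of_nonpos (Real.rpow_nonneg hr.1.le a)
        (sub_nonpos.2 (hineq r hr'))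
  intro s hs
  by_contra! hlt
  have hgs : 0 < g s := by
    have : g s = s ^ a * (deriv w s - K * s) := by
      simp only [g, Real.rpow_add_one hs.1.ne']
      ring
    rw [this]
    exact mul_pos (Real.rpow_pos_of_pos hs.1 a) (sub_pos.2 hlt)
  have hsub : Ioc 0 s ⊆ Ioc 0 t := Ioc_subset_Ioc_right hs.2
  obtain ⟨r, hr, hr_lt⟩ := exists_rpow_mul_deriv_lt ha hs.1 hgs (fun r hr => hwd r (hsub hr))
    (fun r hr => hw r (hsub hr))
  have hgr : g s ≤ g r := hanti (hsub hr) hs hr.2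
  have : 0 ≤ K * r ^ (a + 1) := mul_nonneg hK (Real.rpow_nonneg hr.1.le _)
  simp only [g] at hgr hr_lt
  linarith

structure NonnegSupersolution (a : ℝ) (c w : ℝ → ℝ) (ρ : ℝ) : Prop where
  continuousOn : ContinuousOn w (Icc 0 ρ)
  differentiableAt : ∀ r ∈ Ioc 0 ρ, DifferentiableAt ℝ w r
  differentiableAt_deriv : ∀ r ∈ Ioc 0 ρ, DifferentiableAt ℝ (deriv w) r
  nonneg : ∀ r ∈ Icc 0 ρ, 0 ≤ w r
  le_zero : ∀ r ∈ Ioc 0 ρ, deriv (deriv w) r + a / r * deriv w r + c r * w r ≤ 0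

namespace NonnegSupersolution

variable {a ρ : ℝ} {c w : ℝ → ℝ}

theorem mono (hS : NonnegSupersolution a c w ρ) {ρ' : ℝ} (hρ' : ρ' ≤ ρ) :
    NonnegSupersolution a c w ρ' where
  continuousOn := hS.continuousOn.mono (Icc_subset_Icc_right hρ')
  differentiableAt r hr := hS.differentiableAt r (Ioc_subset_Ioc_right hρ' hr)
  differentiableAt_deriv r hr := hS.differentiableAt_deriv r (Ioc_subset_Ioc_right hρ' hr)
  nonneg r hr := hS.nonneg r (Icc_subset_Icc_right hρ' hr)
  le_zero r hr := hS.le_zero r (Ioc_subset_Ioc_right hρ' hr)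

theorem eqOn_zero_of_eqOn_zero (hS : NonnegSupersolution a c w ρ) (ha : 1 < a) {M r₁ : ℝ}
    (hM : 0 ≤ M) (hcM : ∀ r ∈ Icc 0 ρ, -c r ≤ M) (hr₁ : r₁ ∈ Icc 0 ρ)
    (hzero : ∀ r ∈ Icc 0 r₁, w r = 0) (hsmall : M * ρ * (ρ - r₁) < a + 1) :
    ∀ r ∈ Icc 0 ρ, w r = 0 := by
  obtain ⟨m, hm, hmax⟩ :=
    isCompact_Icc.exists_isMaxOn (nonempty_Icc.2 (hr₁.1.trans hr₁.2)) hS.continuousOn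
  have hwm := hS.nonneg m hm
  have ha1 : 0 < a + 1 := by linarith
  set K := M * w m / (a + 1)
  have hK : 0 ≤ K := by positivity
  have hderiv : ∀ r ∈ Ioc 0 ρ, deriv w r ≤ K * r := by
    refine deriv_le_mul_of_deriv_deriv_add_le ha hK hS.differentiableAt
      hS.differentiableAt_deriv (fun r hr => hS.nonneg r (Ioc_subset_Icc_self hr))
      fun r hr => ?_
    have hr' := Ioc_subset_Icc_self hr
    have hcw : -c r * w r ≤ M * w m := mul_le_mul (hcM r hr') (hmax hr') (hS.nonneg r hr') hM
    have hKa : (a + 1) * K = M * w m := by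
      simp only [K]
      field_simp
    linarith [hS.le_zero r hr]
  have hbound : ∀ r ∈ Icc 0 ρ, w r ≤ K * ρ * (ρ - r₁) := by
    intro r hr
    have hρ : 0 ≤ ρ := hr₁.1.trans hr₁.2
    rcases le_total r r₁ with hrr₁ | hr₁r
    · rw [hzero r ⟨hr.1, hrr₁⟩]
      exact mul_nonneg (mul_nonneg hK hρ) (sub_nonneg.2 hr₁.2)
    have hmem : ∀ x ∈ interior (Icc r₁ ρ), x ∈ Ioc 0 ρ := fun x hx => by
      rw [interior_Icc] at hx
      exact ⟨hr₁.1.trans_lt hx.1, hx.2.le⟩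
    have hinc := (convex_Icc r₁ ρ).image_sub_le_mul_sub_of_deriv_le
      (hS.continuousOn.mono (Icc_subset_Icc_left hr₁.1))
      (fun x hx => (hS.differentiableAt x (hmem x hx)).differentiableWithinAt) (C := K * ρ)
      (fun x hx => (hderiv x (hmem x hx)).trans (mul_le_mul_of_nonneg_left (hmem x hx).2 hK))
      r₁ (left_mem_Icc.2 hr₁.2) r ⟨hr₁r, hr.2⟩ hr₁r
    rw [hzero r₁ ⟨hr₁.1, le_rfl⟩, sub_zero] at hinc
    exact hinc.trans (mul_le_mul_of_nonneg_left (by linarith [hr.2]) (mul_nonneg hK hρ))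
  have hwm_le : w m ≤ 0 := by
    have hK' : K * ρ * (ρ - r₁) * (a + 1) = w m * (M * ρ * (ρ - r₁)) := by
      simp only [K]
      field_simp
    nlinarith [hbound m hm]
  exact fun r hr => le_antisymm ((hmax hr).trans hwm_le) (hS.nonneg r hr)


theorem eqOn_zero (hS : NonnegSupersolution a c w ρ) (ha : 1 < a)
    (hc : ContinuousOn c (Icc 0 ρ)) (hw0 : w 0 = 0) : ∀ r ∈ Icc 0 ρ, w r = 0 := by
  intro r hr
  have hρ : 0 ≤ ρ := hr.1.trans hr.2
  obtain ⟨M, hM⟩ := isCompact_Icc.exists_bound_of_continuousOn hc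
  have hM0 : 0 ≤ M := (norm_nonneg _).trans (hM 0 ⟨le_rfl, hρ⟩)
  have hcM : ∀ r ∈ Icc 0 ρ, -c r ≤ M := fun r hr => (neg_le_abs (c r)).trans (hM r hr)
  set h := (a + 1) / (M * ρ + 1)
  have hMρ : 0 < M * ρ + 1 := by positivity
  have hh : 0 < h := div_pos (by linarith) hMρ
  have hMρh : M * ρ * h < a + 1 := by
    rw [mul_div_assoc', div_lt_iff₀ hMρ]
    nlinarith
  have hstep : ∀ n : ℕ, ∀ r ∈ Icc 0 (min ρ (n * h)), w r = 0 := by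
    intro n
    induction n with
    | zero =>
      intro r hr
      rw [Nat.cast_zero, zero_mul, min_eq_right hρ, Icc_self, mem_singleton_iff] at hr
      rw [hr, hw0]
    | succ n ih =>
      set r₁ := min ρ (n * h)
      set r₂ := min ρ ((n + 1 : ℕ) * h)
      have h12 : r₁ ≤ r₂ := min_le_min_left ρ (by gcongr; omega)
      have hr₂ : r₂ ≤ ρ := min_le_left _ _
      have hr₂r₁ : r₂ - r₁ ≤ h := by
        simp only [r₁, r₂, Nat.cast_succ]
        rcases le_total ρ (n * h) with hn | hn
        · rw [min_eq_left hn, min_eq_left (by linarith)]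
          linarith
        · rw [min_eq_right hn]
          linarith [min_le_right ρ ((n + 1) * h)]
      have hr₁ : 0 ≤ r₁ := le_min hρ (by positivity)
      refine (hS.mono hr₂).eqOn_zero_of_eqOn_zero ha hM0
        (fun r hr => hcM r (Icc_subset_Icc_right hr₂ hr)) ⟨hr₁, h12⟩ ih ?_
      calc M * r₂ * (r₂ - r₁) ≤ M * ρ * h := by gcongr
        _ < a + 1 := hMρh
  obtain ⟨n, hn⟩ := exists_nat_ge (ρ / h)
  have hρn : min ρ (n * h) = ρ := min_eq_left ((div_le_iff₀ hh).1 hn)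
  exact hstep n r (by rwa [hρn])

end NonnegSupersolution

theorem stmt19_general (a : ℝ) (ha : 1 < a) (R : ℝ≥0∞) (c w : ℝ → ℝ)
    (hc : ContinuousOn c {r : ℝ | 0 ≤ r ∧ ENNReal.ofReal r < R})
    (hw : ContinuousOn w {r : ℝ | 0 ≤ r ∧ ENNReal.ofReal r < R})
    (hwC2 : ∀ r : ℝ, 0 < r → ENNReal.ofReal r < R → ContDiffAt ℝ 2 w r)
    (hwnn : ∀ r : ℝ, 0 ≤ r → ENNReal.ofReal r < R → 0 ≤ w r)
    (hineq : ∀ r : ℝ, 0 < r → ENNReal.ofReal r < R →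
      deriv (deriv w) r + (a / r) * deriv w r + c r * w r ≤ 0)
    (hw0 : w 0 = 0) :
    ∀ r : ℝ, 0 ≤ r → ENNReal.ofReal r < R → w r = 0 := by
  intro ρ hρ hρR
  have hsub : Icc 0 ρ ⊆ {r : ℝ | 0 ≤ r ∧ ENNReal.ofReal r < R} :=
    fun r hr => ⟨hr.1, (ENNReal.ofReal_le_ofReal hr.2).trans_lt hρR⟩
  have hR : ∀ r ∈ Ioc 0 ρ, ENNReal.ofReal r < R := fun r hr => (hsub (Ioc_subset_Icc_self hr)).2
  have hS : NonnegSupersolution a c w ρ :=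
    { continuousOn := hw.mono hsub
      differentiableAt := fun r hr => (hwC2 r hr.1 (hR r hr)).differentiableAt two_ne_zero
      differentiableAt_deriv := fun r hr =>
        ((hwC2 r hr.1 (hR r hr)).derivWithin (m := 1) le_rfl).differentiableAt one_ne_zero
      nonneg := fun r hr => hwnn r hr.1 (hsub hr).2
      le_zero := fun r hr => hineq r hr.1 (hR r hr) }
  exact hS.eqOn_zero ha (hc.mono hsub) hw0 ρ ⟨hρ, le_rfl⟩

/-- singular Hopf lemma. -/
theorem stmt19 (a : ℝ) (ha : 1 < a) (R : ℝ≥0∞) (hR : 0 < R) (c w : ℝ → ℝ)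
    (hc : ContinuousOn c {r : ℝ | 0 ≤ r ∧ ENNReal.ofReal r < R})
    (hw : ContinuousOn w {r : ℝ | 0 ≤ r ∧ ENNReal.ofReal r < R})
    (hwC2 : ∀ r : ℝ, 0 < r → ENNReal.ofReal r < R → ContDiffAt ℝ 2 w r)
    (hwnn : ∀ r : ℝ, 0 ≤ r → ENNReal.ofReal r < R → 0 ≤ w r)
    (hineq : ∀ r : ℝ, 0 < r → ENNReal.ofReal r < R →
      deriv (deriv w) r + (a / r) * deriv w r + c r * w r ≤ 0)
    (hw0 : w 0 = 0) :
    ∀ r : ℝ, 0 ≤ r → ENNReal.ofReal r < R → w r = 0 :=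
  stmt19_general a ha R c w hc hw hwC2 hwnn hineq hw0
end
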